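/- arXiv:1609.04270 — 7 statements merged into one kernel-verified Lean document; each statement's English description precedes it below -/
import Mathlib

section
/- Let F(k) denote the number of edges of Q_n induced by the initial segment of size k of the binary ordering on subsets of [n] (this is independent of n). Then for all nonnegative integers x, y: F(x+y) - F(x) - F(y) ≥ min{x,y}. -/
open Finset

/-- Number of edges of the hypercube graph `Q_n` with both endpoints in `A`
(ordered pairs counted, then halved). -/
def edgeCount {n : ℕ} (A : Finset (Finset (Fin n))) : ℕ :=
  ((A ×ˢ A).filter (fun p => (symmDiff p.1 p.2).card = 1)).card / 2

/-- Number of edges of `Q_n` with exactly one endpoint in `A` (the edge boundary). -/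
def edgeBoundary {n : ℕ} (A : Finset (Finset (Fin n))) : ℕ :=
  ((A ×ˢ Aᶜ).filter (fun p => (symmDiff p.1 p.2).card = 1)).card

/-- Number of edges of `Q_n` with one endpoint in `X` and the other in `Y`. -/
def edgesBetween {n : ℕ} (X Y : Finset (Finset (Fin n))) : ℕ :=
  ((X ×ˢ Y).filter (fun p => (symmDiff p.1 p.2).card = 1)).card

/-- The antipodal image of a family: pointwise complementation in `[n]`. -/
def barFam {n : ℕ} (A : Finset (Finset (Fin n))) : Finset (Finset (Fin n)) :=
  A.image (fun x => xᶜ)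

/-- Pointwise complementation within a ground set `s`. -/
def barOn {n : ℕ} (s : Finset (Fin n)) (A : Finset (Finset (Fin n))) :
    Finset (Finset (Fin n)) :=
  A.image (fun x => s \ x)

/-- The upper `i`-section of `A`, as a family of subsets of `[n] \ {i}`. -/
def secUp {n : ℕ} (A : Finset (Finset (Fin n))) (i : Fin n) : Finset (Finset (Fin n)) :=
  Finset.univ.filter (fun x => i ∉ x ∧ insert i x ∈ A)

/-- The lower `i`-section of `A`, as a family of subsets of `[n] \ {i}`. -/
def secDown {n : ℕ} (A : Finset (Finset (Fin n))) (i : Fin n) : Finset (Finset (Fin n)) :=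
  Finset.univ.filter (fun x => i ∉ x ∧ x ∈ A)

/-- The value of a subset of `[n]` in the binary ordering. -/
def setToNat {n : ℕ} (x : Finset (Fin n)) : ℕ := ∑ i ∈ x, 2 ^ (i : ℕ)

/-- The initial segment of size `k` of the binary ordering on subsets of `[n]`
(for `k ≤ 2^n`). -/
def iseg (n k : ℕ) : Finset (Finset (Fin n)) :=
  Finset.univ.filter (fun x => setToNat x < k)

/-- `F k`: the number of hypercube edges induced by the initial segment of size `k`
of the binary ordering; equals the sum of binary digit sums of `0, …, k-1`. -/
def binF (k : ℕ) : ℕ := ∑ i ∈ Finset.range k, (Nat.digits 2 i).sum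

/-- The subcube of subsets of `[n]` contained in the first `d` coordinates. -/
def subcube (n d : ℕ) : Finset (Finset (Fin n)) :=
  Finset.univ.filter (fun x => ∀ i ∈ x, (i : ℕ) < d)

lemma digitSum_two_mul (m : ℕ) :
    (Nat.digits 2 (2 * m)).sum = (Nat.digits 2 m).sum := by
  rcases Nat.eq_zero_or_pos m with h | h
  · simp [h]
  · rw [Nat.digits_def' (by norm_num : 1 < 2) (by omega)]
    simp [Nat.mul_div_cancel_left m (by norm_num : 0 < 2), Nat.mul_mod_right]

lemma digitSum_two_mul_add_one (m : ℕ) :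
    (Nat.digits 2 (2 * m + 1)).sum = (Nat.digits 2 m).sum + 1 := by
  rw [Nat.digits_def' (by norm_num : 1 < 2) (by omega)]
  have h1 : (2 * m + 1) % 2 = 1 := by omega
  have h2 : (2 * m + 1) / 2 = m := by omega
  rw [h1, h2]
  simp [Nat.add_comm]

lemma binF_succ (k : ℕ) : binF (k + 1) = binF k + (Nat.digits 2 k).sum := by
  simp [binF, Finset.sum_range_succ]

lemma binF_two_mul (m : ℕ) : binF (2 * m) = 2 * binF m + m := by
  induction m with
  | zero => simp [binF]
  | succ m ih =>
    have h : 2 * (m + 1) = (2 * m + 1) + 1 := by ring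
    rw [h, binF_succ, binF_succ, binF_succ, ih, digitSum_two_mul,
      digitSum_two_mul_add_one]
    ring

lemma binF_two_mul_add_one (m : ℕ) : binF (2 * m + 1) = binF m + binF (m + 1) + m := by
  rw [binF_succ, binF_two_mul, digitSum_two_mul, binF_succ]
  ring

lemma stmt1_aux : ∀ n x y : ℕ, x + y = n → binF x + binF y + min x y ≤ binF (x + y) := by
  intro n
  induction n using Nat.strong_induction_on with
  | _ n IH' =>
  intro x y hn
  have IH : ∀ m, m < n → ∀ x y : ℕ, x + y = m →
      binF x + binF y + min x y ≤ binF (x + y) := fun m hm => IH' m hm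
  subst hn
  rcases Nat.eq_zero_or_pos x with hx | hx
  · subst hx; simp [binF]
  rcases Nat.eq_zero_or_pos y with hy | hy
  · subst hy; simp [binF]
  rcases Nat.even_or_odd x with ⟨a, ha⟩ | ⟨a, ha⟩ <;>
    rcases Nat.even_or_odd y with ⟨b, hb⟩ | ⟨b, hb⟩
  · -- even, even
    subst ha hb
    have h1 : binF a + binF b + min a b ≤ binF (a + b) := IH (a + b) (by omega) a b rfl
    have e1 : a + a + (b + b) = 2 * (a + b) := by ring
    have e2 : a + a = 2 * a := by ring
    have e3 : b + b = 2 * b := by ring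
    rw [e1, e2, e3, binF_two_mul, binF_two_mul, binF_two_mul]
    omega
  · -- even, odd
    subst ha hb
    have h1 : binF a + binF b + min a b ≤ binF (a + b) := IH (a + b) (by omega) a b rfl
    have h2 : binF a + binF (b + 1) + min a (b + 1) ≤ binF (a + (b + 1)) :=
      IH (a + (b + 1)) (by omega) a (b + 1) rfl
    have e1 : a + a + (2 * b + 1) = 2 * (a + b) + 1 := by ring
    have e2 : a + a = 2 * a := by ring
    rw [e1, e2, binF_two_mul, binF_two_mul_add_one, binF_two_mul_add_one]
    have e3 : a + b + 1 = a + (b + 1) := by ring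
    rw [e3]
    omega
  · -- odd, even
    subst ha hb
    have h1 : binF a + binF b + min a b ≤ binF (a + b) := IH (a + b) (by omega) a b rfl
    have h2 : binF (a + 1) + binF b + min (a + 1) b ≤ binF (a + 1 + b) :=
      IH (a + 1 + b) (by omega) (a + 1) b rfl
    have e1 : 2 * a + 1 + (b + b) = 2 * (a + b) + 1 := by ring
    have e2 : b + b = 2 * b := by ring
    rw [e1, e2, binF_two_mul, binF_two_mul_add_one, binF_two_mul_add_one]
    have e3 : a + b + 1 = a + 1 + b := by ring
    rw [e3]
    omega
  · -- odd, odd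
    subst ha hb
    have h1 : binF a + binF (b + 1) + min a (b + 1) ≤ binF (a + (b + 1)) :=
      IH (a + (b + 1)) (by omega) a (b + 1) rfl
    have h2 : binF (a + 1) + binF b + min (a + 1) b ≤ binF (a + 1 + b) :=
      IH (a + 1 + b) (by omega) (a + 1) b rfl
    have e1 : 2 * a + 1 + (2 * b + 1) = 2 * (a + b + 1) := by ring
    rw [e1, binF_two_mul, binF_two_mul_add_one, binF_two_mul_add_one]
    have e3 : a + (b + 1) = a + b + 1 := by ring
    have e4 : a + 1 + b = a + b + 1 := by ring
    rw [e3] at h1; rw [e4] at h2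
    omega

theorem stmt1 (x y : ℕ) : binF x + binF y + min x y ≤ binF (x + y) :=
  stmt1_aux (x + y) x y rfl
end

section
/- Let F be as above. If y is a power of 2 and x ≤ y, then F(x+y) = F(x) + F(y) + x. -/
open Finset

lemma dsum_add_pow : ∀ (m i : ℕ), i < 2 ^ m →
    (Nat.digits 2 (i + 2 ^ m)).sum = (Nat.digits 2 i).sum + 1 := by
  intro m
  induction m with
  | zero =>
    intro i hi
    interval_cases i
    simp
  | succ m ih =>
    intro i hi
    have h1 : 0 < i + 2 ^ (m + 1) := by positivity
    rw [Nat.digits_def' (by norm_num : 1 < 2) h1]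
    have hmod : (i + 2 ^ (m + 1)) % 2 = i % 2 := by
      omega
    have hdiv : (i + 2 ^ (m + 1)) / 2 = i / 2 + 2 ^ m := by
      omega
    have hlt : i / 2 < 2 ^ m := by
      have : 2 ^ (m+1) = 2 * 2 ^ m := by ring
      omega
    rw [hmod, hdiv, List.sum_cons, ih _ hlt]
    rcases Nat.eq_zero_or_pos i with h0 | hp
    · simp [h0]
    · rw [Nat.digits_def' (by norm_num : 1 < 2) hp, List.sum_cons]
      omega

theorem stmt2 (x y : ℕ) (hxy : x ≤ y) (hy : ∃ m : ℕ, y = 2 ^ m) :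
    binF (x + y) = binF x + binF y + x := by
  obtain ⟨m, rfl⟩ := hy
  unfold binF
  rw [add_comm x (2 ^ m), Finset.sum_range_add]
  have : ∀ i ∈ Finset.range x, (Nat.digits 2 (2 ^ m + i)).sum
      = (Nat.digits 2 i).sum + 1 := by
    intro i hi
    rw [add_comm]
    exact dsum_add_pow m i (lt_of_lt_of_le (Finset.mem_range.mp hi) hxy)
  rw [Finset.sum_congr rfl this, Finset.sum_add_distrib]
  simp [mul_comm]
  ring
end

section
/- Let n ≥ 2 and let A be a family of subsets of [n]. For i ∈ [n], let A_i^+ = {x ⊆ [n]\{i} : x ∪ {i} ∈ A} and A_i^- = {x ⊆ [n]\{i} : x ∈ A}. Then for any 1 ≤ i < j ≤ n, min{ | |A_i^+| - |A_i^-| | , | |A_j^+| - |A_j^-| | } ≤ 2^{n-2}. -/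
open Finset

lemma secUp_card {n : ℕ} (A : Finset (Finset (Fin n))) (i : Fin n) :
    (secUp A i).card = (A.filter (fun x => i ∈ x)).card := by
  apply Finset.card_bij (fun x _ => insert i x)
  · intro x hx; simp only [secUp, mem_filter, mem_univ, true_and] at hx ⊢
    exact ⟨hx.2, mem_insert_self i x⟩
  · intro x hx y hy h
    simp only [secUp, mem_filter, mem_univ, true_and] at hx hy
    have := congrArg (·.erase i) h
    simpa [Finset.erase_insert hx.1, Finset.erase_insert hy.1] using this
  · intro y hy
    simp only [mem_filter] at hy
    refine ⟨y.erase i, ?_, ?_⟩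
    · simp [secUp, hy.2, Finset.insert_erase hy.2, hy.1]
    · simp [Finset.insert_erase hy.2]

lemma quad_card_le {n : ℕ} (i j : Fin n) (hij : i ≠ j) (bi bj : Bool) :
    (Finset.univ.filter (fun x : Finset (Fin n) =>
      (i ∈ x ↔ bi = true) ∧ (j ∈ x ↔ bj = true))).card ≤ 2 ^ (n - 2) := by
  have hcard : (((Finset.univ.erase i).erase j).powerset).card = 2 ^ (n - 2) := by
    rw [Finset.card_powerset, Finset.card_erase_of_mem (by simp [hij.symm]),
      Finset.card_erase_of_mem (by simp), Finset.card_univ, Fintype.card_fin]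
    rfl
  rw [← hcard]
  apply Finset.card_le_card_of_injOn (fun x => (x.erase i).erase j)
  · intro x hx
    simp only [Finset.mem_coe, Finset.mem_powerset]
    intro k hk
    simp only [Finset.mem_erase] at hk ⊢
    exact ⟨hk.1, hk.2.1, mem_univ k⟩
  · intro x hx y hy h
    simp only [coe_filter, Set.mem_setOf_eq, mem_univ, true_and] at hx hy
    ext k
    by_cases hki : k = i
    · subst hki; rw [hx.1, hy.1]
    by_cases hkj : k = j
    · subst hkj; rw [hx.2, hy.2]
    have : k ∈ (x.erase i).erase j ↔ k ∈ (y.erase i).erase j := by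
      have h' : (x.erase i).erase j = (y.erase i).erase j := h; rw [h']
    simpa [hki, hkj] using this

lemma split_card {n : ℕ} (A : Finset (Finset (Fin n))) (p q : Finset (Fin n) → Prop)
    [DecidablePred p] [DecidablePred q] :
    (A.filter (fun x => p x ∧ q x)).card + (A.filter (fun x => ¬ p x ∧ q x)).card
      = (A.filter q).card := by
  have e1 : A.filter (fun x => p x ∧ q x) = (A.filter q).filter p := by
    rw [Finset.filter_filter]; exact Finset.filter_congr (fun x _ => by tauto)
  have e2 : A.filter (fun x => ¬ p x ∧ q x) = (A.filter q).filter (fun x => ¬ p x) := by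
    rw [Finset.filter_filter]; exact Finset.filter_congr (fun x _ => by tauto)
  rw [e1, e2]
  exact Finset.card_filter_add_card_filter_not _

theorem stmt4 (n : ℕ) (hn : 2 ≤ n) (A : Finset (Finset (Fin n))) (i j : Fin n)
    (hij : i < j) :
    min |((secUp A i).card : ℤ) - ((secDown A i).card : ℤ)|
      |((secUp A j).card : ℤ) - ((secDown A j).card : ℤ)| ≤ 2 ^ (n - 2) := by
  have hne : i ≠ j := ne_of_lt hij
  set a := (A.filter (fun x => i ∈ x ∧ j ∈ x)).card with ha
  set b := (A.filter (fun x => i ∈ x ∧ j ∉ x)).card with hb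
  set c := (A.filter (fun x => i ∉ x ∧ j ∈ x)).card with hc
  set d := (A.filter (fun x => i ∉ x ∧ j ∉ x)).card with hd
  have hupi : (secUp A i).card = (A.filter (fun x => i ∈ x)).card := secUp_card A i
  have hupj : (secUp A j).card = (A.filter (fun x => j ∈ x)).card := secUp_card A j
  have hdowni : (secDown A i).card = (A.filter (fun x => i ∉ x)).card := by
    congr 1; ext x; simp [secDown, and_comm]
  have hdownj : (secDown A j).card = (A.filter (fun x => j ∉ x)).card := by
    congr 1; ext x; simp [secDown, and_comm]
  have h1 : b + a = (A.filter (fun x => i ∈ x)).card := by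
    rw [hb, ha]
    have h := split_card A (fun x => j ∉ x) (fun x => i ∈ x)
    simp only [not_not] at h
    rw [Finset.filter_congr (s := A) (p := fun x => j ∉ x ∧ i ∈ x) (q := fun x => i ∈ x ∧ j ∉ x) (fun x _ => by tauto),
      Finset.filter_congr (s := A) (p := fun x => j ∈ x ∧ i ∈ x) (q := fun x => i ∈ x ∧ j ∈ x) (fun x _ => by tauto)] at h
    exact h
  have h2 : d + c = (A.filter (fun x => i ∉ x)).card := by
    rw [hd, hc]
    have h := split_card A (fun x => j ∉ x) (fun x => i ∉ x)
    simp only [not_not] at h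
    rw [Finset.filter_congr (s := A) (p := fun x => j ∉ x ∧ i ∉ x) (q := fun x => i ∉ x ∧ j ∉ x) (fun x _ => by tauto),
      Finset.filter_congr (s := A) (p := fun x => j ∈ x ∧ i ∉ x) (q := fun x => i ∉ x ∧ j ∈ x) (fun x _ => by tauto)] at h
    exact h
  have h3 : a + c = (A.filter (fun x => j ∈ x)).card := by
    rw [ha, hc]
    simpa using split_card A (fun x => i ∈ x) (fun x => j ∈ x)
  have h4 : b + d = (A.filter (fun x => j ∉ x)).card := by
    rw [hb, hd]
    simpa using split_card A (fun x => i ∈ x) (fun x => j ∉ x)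
  have bound : ∀ (bi bj : Bool) (e : ℕ),
      e = (A.filter (fun x => (i ∈ x ↔ bi = true) ∧ (j ∈ x ↔ bj = true))).card →
      e ≤ 2 ^ (n - 2) := by
    intro bi bj e he
    rw [he]
    refine le_trans (Finset.card_le_card ?_) (quad_card_le i j hne bi bj)
    intro x hx
    simp only [mem_filter] at hx ⊢
    exact ⟨mem_univ x, hx.2⟩
  have hA : a ≤ 2 ^ (n - 2) := bound true true a (by rw [ha]; congr 1; ext x; simp)
  have hB : b ≤ 2 ^ (n - 2) := bound true false b (by rw [hb]; congr 1; ext x; simp)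
  have hC : c ≤ 2 ^ (n - 2) := bound false true c (by rw [hc]; congr 1; ext x; simp)
  have hD : d ≤ 2 ^ (n - 2) := bound false false d (by rw [hd]; congr 1; ext x; simp)
  obtain ⟨m, hm⟩ : ∃ m : ℕ, 2 ^ (n - 2) = m := ⟨_, rfl⟩
  rw [hm] at hA hB hC hD
  have hmz : (2 : ℤ) ^ (n - 2) = (m : ℤ) := by rw [← hm]; push_cast; ring
  rw [hmz, hupi, hupj, hdowni, hdownj, ← h1, ← h2, ← h3, ← h4, min_le_iff, abs_le, abs_le]
  push_cast
  omega
end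

section
/- Let C, D be families of subsets of [n]. Then 2|C ∩ D| + 2|C ∩ complement-bar(D)| ≤ |C ∩ complement-bar(C)| + |D ∩ complement-bar(D)| + 2·min{|C|, |D|}, where for a family X, complement-bar(X) := { [n] \ x : x ∈ X }. -/
open Finset

lemma barFam_barFam {n : ℕ} (A : Finset (Finset (Fin n))) : barFam (barFam A) = A := by
  simp [barFam, Finset.image_image, Function.comp]

lemma card_barFam {n : ℕ} (A : Finset (Finset (Fin n))) : (barFam A).card = A.card :=
  Finset.card_image_of_injective _ compl_injective

lemma barFam_inter {n : ℕ} (A B : Finset (Finset (Fin n))) :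
    barFam (A ∩ B) = barFam A ∩ barFam B :=
  Finset.image_inter _ _ compl_injective

lemma card_inter_barFam {n : ℕ} (A B : Finset (Finset (Fin n))) :
    (A ∩ barFam B).card = (barFam A ∩ B).card := by
  rw [← card_barFam (A ∩ barFam B), barFam_inter, barFam_barFam]

/-- inclusion-exclusion style identity. -/
lemma card_ie {n : ℕ} (X Y Z : Finset (Finset (Fin n))) :
    (X ∩ Z).card + (Y ∩ Z).card = ((X ∪ Y) ∩ Z).card + ((X ∩ Y) ∩ Z).card := by
  have h1 : (X ∩ Z) ∪ (Y ∩ Z) = (X ∪ Y) ∩ Z := by ext a; simp; tauto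
  have h2 : (X ∩ Z) ∩ (Y ∩ Z) = (X ∩ Y) ∩ Z := by
    ext a; simp only [Finset.mem_inter]; tauto
  have := Finset.card_union_add_card_inter (X ∩ Z) (Y ∩ Z)
  rw [h1, h2] at this
  omega

lemma stmt5_aux {n : ℕ} (C D : Finset (Finset (Fin n))) :
    2 * (C ∩ D).card + 2 * (C ∩ barFam D).card ≤
      (C ∩ barFam C).card + (D ∩ barFam D).card + 2 * D.card := by
  set S := barFam C with hS
  set T := barFam D with hT
  have h1 : (C ∩ D).card + (S ∩ D).card = ((C ∪ S) ∩ D).card + ((C ∩ S) ∩ D).card :=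
    card_ie C S D
  have h2 : (C ∩ T).card + (S ∩ T).card = ((C ∪ S) ∩ T).card + ((C ∩ S) ∩ T).card :=
    card_ie C S T
  have h3 : ((C ∩ S) ∩ D).card + ((C ∩ S) ∩ T).card =
      ((C ∩ S) ∩ (D ∪ T)).card + ((C ∩ S) ∩ (D ∩ T)).card := by
    rw [inter_comm (C ∩ S) D, inter_comm (C ∩ S) T, inter_comm (C ∩ S) (D ∪ T),
      inter_comm (C ∩ S) (D ∩ T)]
    exact card_ie D T (C ∩ S)
  -- card equalities
  have e1 : (S ∩ T).card = (C ∩ D).card := by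
    rw [hS, hT, ← barFam_inter, card_barFam]
  have e2 : (S ∩ D).card = (C ∩ T).card := by
    rw [hS, hT, ← card_inter_barFam]
  -- bounds
  have b1 : ((C ∪ S) ∩ D).card ≤ D.card :=
    Finset.card_le_card (Finset.inter_subset_right)
  have b2 : ((C ∪ S) ∩ T).card ≤ D.card := by
    calc ((C ∪ S) ∩ T).card ≤ T.card := Finset.card_le_card (Finset.inter_subset_right)
    _ = D.card := card_barFam D
  have b3 : ((C ∩ S) ∩ (D ∪ T)).card ≤ (C ∩ S).card :=
    Finset.card_le_card (Finset.inter_subset_left)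
  have b4 : ((C ∩ S) ∩ (D ∩ T)).card ≤ (D ∩ T).card :=
    Finset.card_le_card (Finset.inter_subset_right)
  omega

theorem stmt5 (n : ℕ) (C D : Finset (Finset (Fin n))) :
    2 * (C ∩ D).card + 2 * (C ∩ barFam D).card ≤
      (C ∩ barFam C).card + (D ∩ barFam D).card + 2 * min C.card D.card := by
  rcases le_total C.card D.card with h | h
  · rw [min_eq_left h]
    have key : (C ∩ barFam D).card = (D ∩ barFam C).card := by
      rw [card_inter_barFam, inter_comm]
    have hcd : (C ∩ D).card = (D ∩ C).card := by rw [inter_comm]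
    have := stmt5_aux D C
    omega
  · rw [min_eq_right h]
    exact stmt5_aux C D
end

section
/- For any family A of subsets of [n], f(A^c) = f(A) + 2(n+1)(2^{n-1} - |A|), where f(B) := 2e(B) + |B ∩ B̄|, A^c is the complement of A within the power set of [n], and B̄ = { [n]\x : x ∈ B }. -/
open Finset

lemma eb_sum {n : ℕ} (X Y : Finset (Finset (Fin n))) :
    edgesBetween X Y = ∑ x ∈ X, (Y.filter fun y => (symmDiff x y).card = 1).card := by
  unfold edgesBetween
  rw [Finset.card_eq_sum_card_fiberwise (f := Prod.fst) (t := X)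
    (fun p hp => (Finset.mem_product.1 (Finset.mem_filter.1 hp).1).1)]
  refine Finset.sum_congr rfl fun x hx => ?_
  have : ((X ×ˢ Y).filter (fun p => (symmDiff p.1 p.2).card = 1)).filter
      (fun z => z.1 = x) = {x} ×ˢ (Y.filter fun y => (symmDiff x y).card = 1) := by
    ext ⟨a, b⟩
    simp only [Finset.mem_filter, Finset.mem_product, Finset.mem_singleton]
    constructor
    · rintro ⟨⟨⟨_, hb⟩, hq⟩, rfl⟩; exact ⟨rfl, hb, hq⟩
    · rintro ⟨rfl, hb, hq⟩; exact ⟨⟨⟨hx, hb⟩, hq⟩, rfl⟩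
  rw [this, Finset.card_product, Finset.card_singleton, one_mul]

lemma eb_symm {n : ℕ} (X Y : Finset (Finset (Fin n))) :
    edgesBetween X Y = edgesBetween Y X := by
  unfold edgesBetween
  apply Finset.card_bij (fun p _ => Prod.swap p)
  · rintro ⟨a, b⟩ hp
    simp only [Finset.mem_filter, Finset.mem_product] at *
    exact ⟨⟨hp.1.2, hp.1.1⟩, by rw [symmDiff_comm]; exact hp.2⟩
  · intro p _ q _ h
    exact Prod.swap_injective h
  · rintro ⟨a, b⟩ hp
    refine ⟨(b, a), ?_, rfl⟩
    simp only [Finset.mem_filter, Finset.mem_product] at *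
    exact ⟨⟨hp.1.2, hp.1.1⟩, by rw [symmDiff_comm]; exact hp.2⟩

lemma deg {n : ℕ} (x : Finset (Fin n)) :
    ((Finset.univ : Finset (Finset (Fin n))).filter
      fun y => (symmDiff x y).card = 1).card = n := by
  have key : ((Finset.univ : Finset (Fin n))).card =
      ((Finset.univ : Finset (Finset (Fin n))).filter
        fun y => (symmDiff x y).card = 1).card := by
    apply Finset.card_bij (fun i _ => symmDiff x {i})
    · intro i _
      simp [symmDiff_symmDiff_cancel_left]
    · intro i _ j _ h
      simpa using Finset.singleton_injective (symmDiff_right_injective x h)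
    · intro y hy
      simp only [Finset.mem_filter] at hy
      obtain ⟨i, hi⟩ := Finset.card_eq_one.1 hy.2
      exact ⟨i, by simp, by rw [← hi, symmDiff_symmDiff_cancel_left]⟩
  simpa using key.symm

lemma eb_univ {n : ℕ} (X : Finset (Finset (Fin n))) :
    edgesBetween X Finset.univ = X.card * n := by
  rw [eb_sum]
  simp [deg]

lemma eb_split {n : ℕ} (X Y : Finset (Finset (Fin n))) :
    edgesBetween X Finset.univ = edgesBetween X Y + edgesBetween X Yᶜ := by
  simp only [eb_sum]
  rw [← Finset.sum_add_distrib]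
  refine Finset.sum_congr rfl fun x _ => ?_
  rw [← Finset.card_union_of_disjoint, ← Finset.filter_union, Finset.union_compl]
  exact Finset.disjoint_filter_filter disjoint_compl_right

lemma eb_even {n : ℕ} (X : Finset (Finset (Fin n))) :
    2 * (edgesBetween X X / 2) = edgesBetween X X := by
  apply Nat.two_mul_div_two_of_even
  unfold edgesBetween
  set S := (X ×ˢ X).filter (fun p => (symmDiff p.1 p.2).card = 1) with hS
  have hne : ∀ p ∈ S, p.1.card ≠ p.2.card := by
    rintro ⟨a, b⟩ hp h
    simp only [hS, Finset.mem_filter] at hp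
    dsimp only at h
    have h1 : (symmDiff a b).card = (a \ b).card + (b \ a).card := by
      rw [symmDiff_def, Finset.sup_eq_union,
        Finset.card_union_of_disjoint disjoint_sdiff_sdiff]
    have h2 : (a \ b).card + (a ∩ b).card = a.card := Finset.card_sdiff_add_card_inter a b
    have h3 : (b \ a).card + (b ∩ a).card = b.card := Finset.card_sdiff_add_card_inter b a
    rw [Finset.inter_comm] at h3
    omega
  have hsplit : S = S.filter (fun p => p.1.card < p.2.card) ∪
      S.filter (fun p => p.2.card < p.1.card) := by
    rw [← Finset.filter_or]
    refine (Finset.filter_true_of_mem fun p hp => ?_).symm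
    rcases lt_trichotomy p.1.card p.2.card with h | h | h
    · exact Or.inl h
    · exact absurd h (hne p hp)
    · exact Or.inr h
  have hcard : (S.filter (fun p => p.1.card < p.2.card)).card =
      (S.filter (fun p => p.2.card < p.1.card)).card := by
    apply Finset.card_bij (fun p _ => Prod.swap p)
    · rintro ⟨a, b⟩ hp
      simp only [hS, Finset.mem_filter, Finset.mem_product] at *
      exact ⟨⟨⟨hp.1.1.2, hp.1.1.1⟩, by rw [symmDiff_comm]; exact hp.1.2⟩, hp.2⟩
    · intro p _ q _ h
      exact Prod.swap_injective h
    · rintro ⟨a, b⟩ hp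
      refine ⟨(b, a), ?_, rfl⟩
      simp only [hS, Finset.mem_filter, Finset.mem_product] at *
      exact ⟨⟨⟨hp.1.1.2, hp.1.1.1⟩, by rw [symmDiff_comm]; exact hp.1.2⟩, hp.2⟩
  rw [hsplit, Finset.card_union_of_disjoint (Finset.disjoint_filter_filter' _ _ (by
    simp only [Function.onFun, disjoint_iff_inf_le]
    intro p hp
    simp only [Pi.inf_apply, inf_Prop_eq] at hp
    exact absurd hp.2 (lt_asymm hp.1))), hcard]
  exact ⟨_, rfl⟩

lemma barFam_compl {n : ℕ} (A : Finset (Finset (Fin n))) :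
    A.image (fun x => xᶜ) = (Aᶜ.image (fun x => xᶜ))ᶜ := by
  ext y
  simp only [Finset.mem_image, Finset.mem_compl]
  constructor
  · rintro ⟨x, hx, rfl⟩ h
    obtain ⟨z, hz, hzy⟩ := h
    rw [compl_inj_iff] at hzy
    exact hz (hzy ▸ hx)
  · intro h
    refine ⟨yᶜ, ?_, compl_compl y⟩
    by_contra hy
    exact h ⟨yᶜ, by simpa using hy, compl_compl y⟩

theorem stmt7' (n : ℕ) (hn : 1 ≤ n) (A : Finset (Finset (Fin n))) :
    (2 * (edgesBetween A A / 2 : ℕ) + ((A ∩ A.image fun x => xᶜ)).card : ℤ)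
      + 2 * (n + 1) * (2 ^ (n - 1) - A.card)
    = (2 * (edgesBetween Aᶜ Aᶜ / 2 : ℕ) + (Aᶜ ∩ (Aᶜ.image fun x => xᶜ)).card : ℤ) := by
  rw [barFam_compl Aᶜ, compl_compl]
  have hpow : ((2 ^ n : ℕ) : ℤ) = 2 * 2 ^ (n - 1) := by
    push_cast
    conv_lhs => rw [show n = (n-1)+1 by omega]
    ring
  have hU : Fintype.card (Finset (Fin n)) = 2 ^ n := by simp
  have h5 : ((A.card : ℤ)) + Aᶜ.card = ((2 ^ n : ℕ) : ℤ) := by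
    exact_mod_cast congrArg (Nat.cast : ℕ → ℤ)
      (by rw [Finset.card_add_card_compl, hU] : A.card + Aᶜ.card = 2 ^ n)
  have hB : (((A ∪ A.image fun x => xᶜ).card : ℤ))
      + ((Aᶜ ∩ (A.image fun x => xᶜ)ᶜ).card : ℤ) = ((2 ^ n : ℕ) : ℤ) := by
    exact_mod_cast congrArg (Nat.cast : ℕ → ℤ) (by
      rw [← Finset.compl_union, Finset.card_add_card_compl, hU] :
      (A ∪ A.image fun x => xᶜ).card + (Aᶜ ∩ (A.image fun x => xᶜ)ᶜ).card = 2 ^ n)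
  have hbc : (((A.image fun x => xᶜ).card : ℤ)) = A.card := by
    exact_mod_cast congrArg (Nat.cast : ℕ → ℤ)
      (Finset.card_image_of_injective _ compl_injective)
  have hui : (((A ∪ A.image fun x => xᶜ).card : ℤ))
      + ((A ∩ A.image fun x => xᶜ).card : ℤ)
      = ((A.card : ℤ)) + ((A.image fun x => xᶜ).card : ℤ) := by
    exact_mod_cast congrArg (Nat.cast : ℕ → ℤ) (Finset.card_union_add_card_inter _ _)
  have h1 : ((edgesBetween A A : ℤ)) + edgesBetween A Aᶜ = (A.card : ℤ) * n := by
    exact_mod_cast congrArg (Nat.cast : ℕ → ℤ) (by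
      rw [← eb_univ A, eb_split A A] :
      edgesBetween A A + edgesBetween A Aᶜ = A.card * n)
  have h2 : ((edgesBetween Aᶜ Aᶜ : ℤ)) + edgesBetween Aᶜ A = (Aᶜ.card : ℤ) * n := by
    exact_mod_cast congrArg (Nat.cast : ℕ → ℤ) (by
      have h := eb_split Aᶜ Aᶜ
      rw [compl_compl] at h
      rw [← eb_univ Aᶜ, h] :
      edgesBetween Aᶜ Aᶜ + edgesBetween Aᶜ A = Aᶜ.card * n)
  have h3 : ((edgesBetween A Aᶜ : ℤ)) = edgesBetween Aᶜ A := by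
    exact_mod_cast congrArg (Nat.cast : ℕ → ℤ) (eb_symm A Aᶜ)
  have g1 : 2 * ((edgesBetween A A / 2 : ℕ) : ℤ) = edgesBetween A A := by
    exact_mod_cast congrArg (Nat.cast : ℕ → ℤ) (eb_even A)
  have g2 : 2 * ((edgesBetween Aᶜ Aᶜ / 2 : ℕ) : ℤ) = edgesBetween Aᶜ Aᶜ := by
    exact_mod_cast congrArg (Nat.cast : ℕ → ℤ) (eb_even Aᶜ)
  linear_combination g1 - g2 + hui - hB + hbc + h1 - h2 - h3 - (n : ℤ) * h5
    - ((n : ℤ) + 1) * hpow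

theorem stmt7 (n : ℕ) (hn : 1 ≤ n) (A : Finset (Finset (Fin n))) :
    (2 * edgeCount Aᶜ + (Aᶜ ∩ barFam Aᶜ).card : ℤ) =
      (2 * edgeCount A + (A ∩ barFam A).card : ℤ)
        + 2 * (n + 1) * (2 ^ (n - 1) - A.card) := by
  have h := stmt7' n hn A
  unfold edgeCount barFam
  unfold edgesBetween at h
  linarith [h]
end

section
/- For any k ≤ 2^n, the complement (within the power set of [n]) of the initial segment I_{n,k} of the binary ordering is isomorphic, via an automorphism of the hypercube graph Q_n, to the initial segment I_{n,2^n - k}; consequently e(I_{n,k}^c) = F(2^n - k). -/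
open Finset

def natToSet (n m : ℕ) : Finset (Fin n) :=
  Finset.univ.filter (fun i => (i : ℕ) ∈ m.bitIndices.toFinset)

lemma setToNat_eq {n : ℕ} (x : Finset (Fin n)) :
    setToNat x = ∑ j ∈ x.image (Fin.val), 2 ^ j := by
  rw [Finset.sum_image (by simp [Fin.val_injective.eq_iff])]; rfl

lemma setToNat_injective {n : ℕ} : Function.Injective (setToNat (n := n)) := by
  intro x y h
  rw [setToNat_eq, setToNat_eq] at h
  have := Finset.geomSum_injective (n := 2) le_rfl h
  exact Finset.image_injective Fin.val_injective this

lemma sum_range_two_pow (n : ℕ) : ∑ i ∈ Finset.range n, 2 ^ i = 2 ^ n - 1 := by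
  induction n with
  | zero => simp
  | succ n ih => rw [Finset.sum_range_succ, ih, pow_succ]; omega

lemma setToNat_lt {n : ℕ} (x : Finset (Fin n)) : setToNat x < 2 ^ n := by
  have h1 : setToNat x ≤ ∑ i : Fin n, 2 ^ (i : ℕ) :=
    Finset.sum_le_sum_of_subset (Finset.subset_univ x)
  have h2 : ∑ i : Fin n, 2 ^ (i : ℕ) = 2 ^ n - 1 := by
    rw [Fin.sum_univ_eq_sum_range, sum_range_two_pow]
  have := Nat.one_le_two_pow (n := n)
  omega

lemma setToNat_natToSet {n m : ℕ} (hm : m < 2 ^ n) : setToNat (natToSet n m) = m := by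
  have himg : (natToSet n m).image Fin.val = m.bitIndices.toFinset := by
    ext j
    simp only [natToSet, Finset.mem_image, Finset.mem_filter, Finset.mem_univ, true_and]
    constructor
    · rintro ⟨i, hi, rfl⟩; exact hi
    · intro hj
      have hjn : j < n := by
        have := Nat.two_pow_le_of_mem_bitIndices (List.mem_toFinset.1 hj)
        exact (Nat.pow_lt_pow_iff_right one_lt_two).1 (lt_of_le_of_lt this hm)
      exact ⟨⟨j, hjn⟩, hj, rfl⟩
  rw [setToNat_eq, himg, Finset.twoPowSum_toFinset_bitIndices]

lemma natToSet_setToNat {n : ℕ} (x : Finset (Fin n)) : natToSet n (setToNat x) = x :=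
  setToNat_injective (setToNat_natToSet (setToNat_lt x))

lemma digits_sum_eq_bitIndices_length : ∀ m : ℕ, (Nat.digits 2 m).sum = m.bitIndices.length := by
  intro m
  induction m using Nat.strong_induction_on with
  | _ m ih =>
    rcases Nat.eq_zero_or_pos m with rfl | hm
    · simp
    rw [Nat.digits_def' (by norm_num : 1 < 2) hm]
    have hdiv : m / 2 < m := Nat.div_lt_self hm (by norm_num)
    have ihd := ih (m / 2) hdiv
    rcases Nat.mod_two_eq_zero_or_one m with h | h
    · have : m = 2 * (m / 2) := by omega
      rw [List.sum_cons, ihd, h]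
      conv_rhs => rw [this]
      simp
    · have : m = 2 * (m / 2) + 1 := by omega
      rw [List.sum_cons, ihd, h]
      conv_rhs => rw [this]
      rw [Nat.bitIndices_two_mul_add_one, List.length_cons, List.length_map]; omega

lemma image_val_natToSet {n m : ℕ} (hm : m < 2 ^ n) :
    (natToSet n m).image Fin.val = m.bitIndices.toFinset := by
  ext j
  simp only [natToSet, Finset.mem_image, Finset.mem_filter, Finset.mem_univ, true_and]
  constructor
  · rintro ⟨i, hi, rfl⟩; exact hi
  · intro hj
    have hjn : j < n := by
      have := Nat.two_pow_le_of_mem_bitIndices (List.mem_toFinset.1 hj)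
      exact (Nat.pow_lt_pow_iff_right one_lt_two).1 (lt_of_le_of_lt this hm)
    exact ⟨⟨j, hjn⟩, hj, rfl⟩

lemma card_natToSet {n m : ℕ} (hm : m < 2 ^ n) :
    (natToSet n m).card = (Nat.digits 2 m).sum := by
  rw [digits_sum_eq_bitIndices_length,
    ← Finset.card_image_of_injective _ Fin.val_injective, image_val_natToSet hm,
    List.toFinset_card_of_nodup Nat.bitIndices_sorted.nodup]

lemma mem_iseg {n k : ℕ} {x : Finset (Fin n)} : x ∈ iseg n k ↔ setToNat x < k := by
  simp [iseg]

lemma iseg_succ {n m : ℕ} (hm : m < 2 ^ n) :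
    iseg n (m + 1) = insert (natToSet n m) (iseg n m) := by
  ext y
  simp only [mem_iseg, Finset.mem_insert]
  constructor
  · intro h
    rcases Nat.lt_succ_iff_lt_or_eq.1 h with h | h
    · exact Or.inr h
    · exact Or.inl (by rw [← h, natToSet_setToNat])
  · rintro (rfl | h)
    · rw [setToNat_natToSet hm]; omega
    · exact Nat.lt_succ_of_lt h

lemma natToSet_not_mem_iseg {n m : ℕ} (hm : m < 2 ^ n) : natToSet n m ∉ iseg n m := by
  simp [mem_iseg, setToNat_natToSet hm]

lemma symmDiff_erase {n : ℕ} {x : Finset (Fin n)} {i : Fin n} (hi : i ∈ x) :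
    symmDiff x (x.erase i) = {i} := by
  ext j
  simp only [Finset.mem_symmDiff, Finset.mem_erase, Finset.mem_singleton]
  by_cases h : j = i <;> simp [h, hi] <;> tauto

lemma neighbors_eq {n m : ℕ} (hm : m < 2 ^ n) :
    (iseg n m).filter (fun y => (symmDiff (natToSet n m) y).card = 1)
      = (natToSet n m).image (fun i => (natToSet n m).erase i) := by
  set x := natToSet n m with hx
  have hxm : setToNat x = m := setToNat_natToSet hm
  ext y
  simp only [Finset.mem_filter, Finset.mem_image, mem_iseg]
  constructor
  · rintro ⟨hy, hcard⟩
    obtain ⟨i, hi⟩ := Finset.card_eq_one.1 hcard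
    have hyi : y = symmDiff x {i} := by
      rw [← hi, symmDiff_symmDiff_cancel_left]
    by_cases hix : i ∈ x
    · refine ⟨i, hix, ?_⟩
      rw [hyi, ← symmDiff_erase hix, symmDiff_symmDiff_cancel_left]
    · exfalso
      have : y = insert i x := by
        rw [hyi]; ext j
        simp only [Finset.mem_symmDiff, Finset.mem_singleton, Finset.mem_insert]
        by_cases h : j = i <;> simp [h, hix] <;> tauto
      have h2 : setToNat y = 2 ^ (i : ℕ) + setToNat x := by
        rw [this]; exact Finset.sum_insert hix
      rw [hxm] at h2
      have h1 : (0:ℕ) < 2 ^ (i : ℕ) := Nat.pow_pos (by norm_num)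
      omega
  · rintro ⟨i, hi, rfl⟩
    have hsum : 2 ^ (i : ℕ) + setToNat (x.erase i) = m := by
      rw [← hxm]; simp only [setToNat]; exact Finset.add_sum_erase x (fun j => 2 ^ (j:ℕ)) hi
    have h1 : (0:ℕ) < 2 ^ (i : ℕ) := Nat.pow_pos (by norm_num)
    refine ⟨by omega, ?_⟩
    rw [symmDiff_erase hi, Finset.card_singleton]

lemma card_neighbors {n m : ℕ} (hm : m < 2 ^ n) :
    ((iseg n m).filter (fun y => (symmDiff (natToSet n m) y).card = 1)).card
      = (Nat.digits 2 m).sum := by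
  rw [neighbors_eq hm, ← card_natToSet hm]
  apply Finset.card_image_of_injOn
  intro i hi j hj hij
  by_contra hne
  have : i ∈ (natToSet n m).erase j := Finset.mem_erase.2 ⟨hne, hi⟩
  have hij' : (natToSet n m).erase i = (natToSet n m).erase j := hij
  rw [← hij'] at this
  exact (Finset.mem_erase.1 this).1 rfl

lemma pairs_insert {n : ℕ} (A : Finset (Finset (Fin n))) (a : Finset (Fin n)) (ha : a ∉ A) :
    (((insert a A) ×ˢ (insert a A)).filter (fun p => (symmDiff p.1 p.2).card = 1)).card
      = ((A ×ˢ A).filter (fun p => (symmDiff p.1 p.2).card = 1)).card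
        + 2 * (A.filter (fun y => (symmDiff a y).card = 1)).card := by
  classical
  set N := A.filter (fun y => (symmDiff a y).card = 1) with hN
  have haa : ¬ ((symmDiff a a).card = 1) := by simp
  have hcomm : ∀ p q : Finset (Fin n), (symmDiff p q).card = (symmDiff q p).card := by
    intro p q; rw [symmDiff_comm]
  have hdecomp : ((insert a A) ×ˢ (insert a A)).filter (fun p => (symmDiff p.1 p.2).card = 1)
      = ((A ×ˢ A).filter (fun p => (symmDiff p.1 p.2).card = 1))
        ∪ ({a} ×ˢ N) ∪ (N ×ˢ {a}) := by
    ext ⟨p, q⟩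
    simp only [Finset.mem_filter, Finset.mem_product, Finset.mem_insert, Finset.mem_union,
      Finset.mem_singleton, hN]
    constructor
    · rintro ⟨⟨hp | hp, hq | hq⟩, hpq⟩
      · exfalso; subst hp; subst hq; exact haa hpq
      · subst hp; exact Or.inl (Or.inr ⟨rfl, hq, hpq⟩)
      · subst hq; exact Or.inr ⟨⟨hp, by rw [hcomm]; exact hpq⟩, rfl⟩
      · exact Or.inl (Or.inl ⟨⟨hp, hq⟩, hpq⟩)
    · rintro ((⟨⟨hp, hq⟩, hpq⟩ | ⟨rfl, hy, hcy⟩) | ⟨⟨hy, hcy⟩, rfl⟩)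
      · exact ⟨⟨Or.inr hp, Or.inr hq⟩, hpq⟩
      · exact ⟨⟨Or.inl rfl, Or.inr hy⟩, hcy⟩
      · exact ⟨⟨Or.inr hy, Or.inl rfl⟩, by rw [hcomm]; exact hcy⟩
  have hNsub : ∀ y ∈ N, y ∈ A := fun y hy => (Finset.mem_filter.1 hy).1
  have hd1 : Disjoint ((A ×ˢ A).filter (fun p => (symmDiff p.1 p.2).card = 1))
      ({a} ×ˢ N) := by
    rw [Finset.disjoint_left]
    rintro ⟨p, q⟩ hmem hmem2
    rw [Finset.mem_product, Finset.mem_singleton] at hmem2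
    exact ha (hmem2.1 ▸ (Finset.mem_product.1 (Finset.mem_filter.1 hmem).1).1)
  have hd2 : Disjoint (((A ×ˢ A).filter (fun p => (symmDiff p.1 p.2).card = 1))
      ∪ ({a} ×ˢ N)) (N ×ˢ {a}) := by
    rw [Finset.disjoint_left]
    rintro ⟨p, q⟩ hmem hmem2
    rw [Finset.mem_product, Finset.mem_singleton] at hmem2
    rcases Finset.mem_union.1 hmem with h | h
    · exact ha (hmem2.2 ▸ (Finset.mem_product.1 (Finset.mem_filter.1 h).1).2)
    · rw [Finset.mem_product, Finset.mem_singleton] at h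
      exact ha (h.1 ▸ hNsub p hmem2.1)
  rw [hdecomp, Finset.card_union_of_disjoint hd2, Finset.card_union_of_disjoint hd1,
    Finset.card_product, Finset.card_product]
  simp only [Finset.card_singleton]
  ring

lemma e2_iseg {n : ℕ} : ∀ m, m ≤ 2 ^ n →
    (((iseg n m) ×ˢ (iseg n m)).filter (fun p => (symmDiff p.1 p.2).card = 1)).card
      = 2 * binF m := by
  intro m
  induction m with
  | zero =>
    intro _
    have : iseg n 0 = ∅ := by ext x; simp [iseg]
    simp [this, binF]
  | succ m ih =>
    intro hm
    have hm' : m < 2 ^ n := hm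
    rw [iseg_succ hm', pairs_insert _ _ (natToSet_not_mem_iseg hm'), ih (le_of_lt hm'),
      card_neighbors hm']
    simp only [binF, Finset.sum_range_succ]
    ring

lemma edgeCount_iseg {n m : ℕ} (hm : m ≤ 2 ^ n) : edgeCount (iseg n m) = binF m := by
  rw [edgeCount, e2_iseg m hm]
  omega

lemma pairs_image {n : ℕ} (A : Finset (Finset (Fin n))) (f : Finset (Fin n) → Finset (Fin n))
    (hf : Function.Injective f)
    (hP : ∀ x y, (symmDiff x y).card = 1 ↔ (symmDiff (f x) (f y)).card = 1) :
    (((A.image f) ×ˢ (A.image f)).filter (fun p => (symmDiff p.1 p.2).card = 1)).card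
      = ((A ×ˢ A).filter (fun p => (symmDiff p.1 p.2).card = 1)).card := by
  classical
  rw [← Finset.card_image_of_injective
    ((A ×ˢ A).filter (fun p => (symmDiff p.1 p.2).card = 1))
    (Prod.map_injective.2 ⟨hf, hf⟩)]
  congr 1
  ext ⟨u, v⟩
  simp only [Finset.mem_filter, Finset.mem_product, Finset.mem_image, Prod.exists, Prod.map,
    Prod.mk.injEq]
  constructor
  · rintro ⟨⟨⟨x, hx, rfl⟩, ⟨y, hy, rfl⟩⟩, hc⟩
    exact ⟨x, y, ⟨⟨hx, hy⟩, (hP x y).2 hc⟩, rfl, rfl⟩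
  · rintro ⟨x, y, ⟨⟨hx, hy⟩, hc⟩, rfl, rfl⟩
    exact ⟨⟨⟨x, hx, rfl⟩, ⟨y, hy, rfl⟩⟩, (hP x y).1 hc⟩

lemma setToNat_compl {n : ℕ} (x : Finset (Fin n)) :
    setToNat x + setToNat xᶜ = 2 ^ n - 1 := by
  have := Finset.sum_add_sum_compl x (fun i : Fin n => 2 ^ (i : ℕ))
  rw [setToNat, setToNat, this, Fin.sum_univ_eq_sum_range (fun i => 2 ^ i), sum_range_two_pow]

theorem stmt9 (n k : ℕ) (hk : k ≤ 2 ^ n) :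
    ∃ σ : Finset (Fin n) ≃ Finset (Fin n),
      (∀ x y : Finset (Fin n),
        (symmDiff x y).card = 1 ↔ (symmDiff (σ x) (σ y)).card = 1) ∧
      (iseg n k)ᶜ.image σ = iseg n (2 ^ n - k) ∧
      edgeCount (iseg n k)ᶜ = binF (2 ^ n - k) := by
  classical
  have h1 : (1:ℕ) ≤ 2 ^ n := Nat.one_le_two_pow
  have himg : (iseg n k)ᶜ.image (fun x : Finset (Fin n) => xᶜ) = iseg n (2 ^ n - k) := by
    ext y
    simp only [Finset.mem_image, Finset.mem_compl, iseg, Finset.mem_filter, Finset.mem_univ,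
      true_and, not_lt]
    constructor
    · rintro ⟨x, hx, rfl⟩
      have hc := setToNat_compl x
      have hl := setToNat_lt x
      omega
    · intro hy
      refine ⟨yᶜ, ?_, compl_compl y⟩
      have hc := setToNat_compl yᶜ
      rw [compl_compl] at hc
      have hl := setToNat_lt y
      omega
  have hedge : edgeCount (iseg n k)ᶜ = binF (2 ^ n - k) := by
    have hcompl : ∀ x y : Finset (Fin n),
        (symmDiff x y).card = 1 ↔ (symmDiff xᶜ yᶜ).card = 1 := by
      intro x y; rw [compl_symmDiff_compl]
    have := pairs_image (iseg n k)ᶜ (fun x => xᶜ) (fun x y h => by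
      simpa using congrArg compl h) hcompl
    rw [himg, e2_iseg _ (Nat.sub_le _ _)] at this
    rw [edgeCount, ← this]
    omega
  refine ⟨⟨fun x => xᶜ, fun x => xᶜ, fun x => compl_compl x, fun x => compl_compl x⟩, ?_, ?_, hedge⟩
  · intro x y
    simp only [Equiv.coe_fn_mk]
    rw [compl_symmDiff_compl]
  · exact himg
end

section
/- Let A be an antipodal family of subsets of [n] (A = Ā). Then |∂A| ≥ |∂(I_{n,|A|/2} ∪ complement-bar(I_{n,|A|/2}))|, i.e., among antipodal families of a given size, the union of an initial segment of the binary ordering of half that size with its antipodal image has the smallest edge boundary. -/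
open Finset

namespace AP
def ds (n : ℕ) : ℕ := (Nat.digits 2 n).sum

lemma ds_def {n : ℕ} (h : n ≠ 0) : ds n = n % 2 + ds (n / 2) := by
  unfold ds
  rw [Nat.digits_def' (by norm_num : 1 < 2) (Nat.pos_of_ne_zero h)]
  simp

lemma binF_succ (k : ℕ) : binF (k+1) = binF k + ds k := Finset.sum_range_succ _ k

lemma ds_two_mul (k : ℕ) : ds (2*k) = ds k := by
  rcases Nat.eq_zero_or_pos k with h|h
  · simp [h]
  · rw [ds_def (by omega)]
    have : 2*k % 2 = 0 := by omega
    have h2 : 2*k/2 = k := by omega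
    rw [this, h2]; omega

lemma ds_two_mul_add_one (k : ℕ) : ds (2*k+1) = 1 + ds k := by
  rw [ds_def (by omega)]
  have : (2*k+1) % 2 = 1 := by omega
  have h2 : (2*k+1)/2 = k := by omega
  rw [this, h2]

lemma binF_two_mul (k : ℕ) : binF (2*k) = 2 * binF k + k := by
  induction k with
  | zero => simp [binF]
  | succ k ih =>
    have : 2*(k+1) = 2*k+1+1 := by ring
    rw [this, binF_succ, binF_succ, ih, binF_succ, ds_two_mul, ds_two_mul_add_one]
    ring

lemma ds_pow_add {t i : ℕ} (h : i < 2^t) : ds (2^t + i) = 1 + ds i := by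
  induction t generalizing i with
  | zero =>
    interval_cases i
    simp [ds]
  | succ t ih =>
    have hps : (2:ℕ)^(t+1) = 2*2^t := by rw [Nat.pow_succ]; ring
    rcases Nat.eq_zero_or_pos i with h0|h0
    · subst h0
      rw [add_zero, ds_def (by positivity)]
      have h1 : 2^(t+1) % 2 = 0 := by omega
      have h2 : 2^(t+1) / 2 = 2^t := by omega
      have h3 : ds (2^t) = 1 := by
        have h4 := ih (show (0:ℕ) < 2^t by positivity)
        rw [add_zero] at h4
        simpa [ds] using h4
      rw [h1, h2, h3]
      simp [ds]
    · rw [ds_def (by positivity)]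
      have h1 : (2^(t+1) + i) % 2 = i % 2 := by omega
      have h2 : (2^(t+1) + i) / 2 = 2^t + i/2 := by omega
      rw [h1, h2, ih (by omega)]
      conv_rhs => rw [ds_def (by omega : i ≠ 0)]
      generalize ds (i/2) = D
      omega

lemma binF_pow_add {t s : ℕ} (h : s ≤ 2^t) : binF (2^t + s) = binF (2^t) + binF s + s := by
  induction s with
  | zero => simp [binF]
  | succ s ih =>
    have hs : s ≤ 2^t := by omega
    have : 2^t + (s+1) = (2^t + s) + 1 := by ring
    rw [this, binF_succ, ih hs, ds_pow_add (by omega), binF_succ]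
    ring

lemma binF_pow (m : ℕ) : 2 * binF (2^m) = m * 2^m := by
  induction m with
  | zero => simp [binF, ds]
  | succ m ih =>
    have h1 : (2:ℕ)^(m+1) = 2^m + 2^m := by rw [Nat.pow_succ]; ring
    rw [h1, binF_pow_add (le_refl _)]
    ring_nf
    ring_nf at ih
    omega

lemma binF_compl {m s : ℕ} (h : s ≤ 2^m) : binF (2^m - s) + m * s = binF (2^m) + binF s := by
  induction m generalizing s with
  | zero =>
    interval_cases s <;> simp [binF]
  | succ m ih =>
    have hp : (2:ℕ)^(m+1) = 2^m + 2^m := by rw [Nat.pow_succ]; ring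
    have hBp : binF (2^(m+1)) = 2 * binF (2^m) + 2^m := by
      rw [hp, binF_pow_add (le_refl _)]; ring
    have hK3 : 2 * binF (2^m) = m * 2^m := binF_pow m
    rcases le_or_gt s (2^m) with hs|hs
    · have h1 : 2^(m+1) - s = 2^m + (2^m - s) := by omega
      rw [h1, binF_pow_add (by omega), hBp]
      have hih := ih hs
      have hms : (m+1) * s = m * s + s := by ring
      rw [hms]
      generalize hms2 : m * s = MS at hih ⊢
      omega
    · set v := s - 2^m with hv
      have hv2 : v ≤ 2^m := by omega
      have h1 : 2^(m+1) - s = 2^m - v := by omega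
      have h2 : binF s = binF (2^m) + binF v + v := by
        have hsv : s = 2^m + v := by omega
        rw [hsv, binF_pow_add hv2]
      have hih := ih hv2
      rw [h1, h2, hBp]
      have hexp : (m+1) * s = m*v + m * 2^m + s := by
        have hsv : s = 2^m + v := by omega
        rw [hsv]; ring
      rw [hexp]
      generalize hmv : m * v = MV at hih ⊢
      generalize hm2 : m * 2^m = M2 at hK3 ⊢
      omega

lemma binF_superadd : ∀ N a b : ℕ, a + b ≤ N → b ≤ a → binF a + binF b + b ≤ binF (a+b) := by
  intro N
  induction N using Nat.strong_induction_on with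
  | _ N IH =>
    intro a b hN hba
    rcases Nat.eq_zero_or_pos b with hb|hb
    · subst hb; simp [binF]
    have hN2 : 2 ≤ a + b := by omega
    set n := a + b with hn
    -- find t with 2^t < n ≤ 2^(t+1)
    obtain ⟨t, ht1, ht2⟩ : ∃ t, 2^t < n ∧ n ≤ 2^(t+1) := by
      refine ⟨Nat.log 2 (n-1), ?_, ?_⟩
      · have h := Nat.pow_log_le_self 2 (show n-1 ≠ 0 by omega)
        omega
      · have h := Nat.lt_pow_succ_log_self (by norm_num : 1 < 2) (n-1)
        omega
    set P := 2^t with hP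
    rcases le_or_gt P a with hPa|hPa
    · -- a = P + r
      set r := a - P with hr
      have hr2 : r ≤ P := by
        have : n ≤ 2*P := by rw [hP]; rw [Nat.pow_succ] at ht2; omega
        omega
      have hrb : r + b ≤ P := by
        have : n ≤ 2*P := by rw [hP]; rw [Nat.pow_succ] at ht2; omega
        omega
      have e1 : binF a = binF P + binF r + r := by
        have : a = P + r := by omega
        rw [this, binF_pow_add hr2]
      have e2 : binF n = binF P + binF (r+b) + (r+b) := by
        have : n = P + (r+b) := by omega
        rw [this, binF_pow_add hrb]
      have hIH : binF r + binF b + min r b ≤ binF (r+b) := by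
        rcases le_total b r with h'|h'
        · have hh := IH (r+b) (by omega) r b (le_refl _) h'
          omega
        · have hh := IH (r+b) (by omega) b r (by omega) h'
          rw [add_comm b r] at hh
          omega
      omega
    · -- a < P < n ; complement pair
      set s := n - P with hs
      have hs1 : 1 ≤ s := by omega
      set a' := P - a with ha'
      set b' := P - b with hb'
      have hab' : a' + b' = 2*P - n := by omega
      have hsum : a' + b' < n := by omega
      have hba' : a' ≤ b' := by omega
      have hIH : binF b' + binF a' + a' ≤ binF (a'+b') := by
        have hh := IH (a'+b') (by omega) b' a' (by omega) hba'
        rw [add_comm b' a'] at hh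
        omega
      have hK4a : binF a + t * a' = binF P + binF a' := by
        have h2 : 2^t - a' = a := by omega
        calc binF a + t * a' = binF (2^t - a') + t * a' := by rw [h2]
        _ = binF P + binF a' := binF_compl (by omega)
      have hK4b : binF b + t * b' = binF P + binF b' := by
        have h2 : 2^t - b' = b := by omega
        calc binF b + t * b' = binF (2^t - b') + t * b' := by rw [h2]
        _ = binF P + binF b' := binF_compl (by omega)
      have hab2 : a' + b' ≤ P := by omega
      have hK4s : binF s + t * (a'+b') = binF P + binF (a'+b') := by
        have h2 : 2^t - (a'+b') = s := by omega
        calc binF s + t*(a'+b') = binF (2^t - (a'+b')) + t*(a'+b') := by rw [h2]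
        _ = binF P + binF (a'+b') := binF_compl hab2
      have hK1 : binF n = binF P + binF s + s := by
        have h2 : n = P + s := by omega
        rw [h2, binF_pow_add (by omega)]
      have hK3 : 2 * binF P = t * P := binF_pow t
      have hexp : t * (a'+b') = t * a' + t * b' := by ring
      generalize hta : t * a' = TA at *
      generalize htb : t * b' = TB at *
      generalize hts : t * (a'+b') = TS at *
      generalize htp : t * P = TP at *
      omega

lemma binF_superadd' {a b : ℕ} (h : b ≤ a) : binF a + binF b + b ≤ binF (a+b) :=
  binF_superadd (a+b) a b (le_refl _) h

-- main arithmetic lemma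
lemma AL {M p q : ℕ} (hqp : q ≤ p) (hpq : p + q ≤ 2^M) :
    2 * binF p + 2 * binF q + 2*q + min (2*p - 2^M) (2*q) ≤ 2 * binF (p+q) := by
  rcases le_or_gt (2*p) (2^M) with h|h
  · have : 2*p - 2^M = 0 := by omega
    rw [this]
    have := binF_superadd' hqp
    omega
  · -- p > 2^(M-1); M ≥ 1
    rcases Nat.eq_zero_or_pos M with hM|hM
    · subst hM
      have hq : q = 0 := by simp at hpq; omega
      subst hq
      simp [binF]
    set H := 2^(M-1) with hH
    have hHM : 2^M = 2*H := by
      rw [hH, ← Nat.pow_succ']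
      congr 1
      omega
    set r := p - H with hr2
    have hrH : r ≤ H := by omega
    have hrqH : r + q ≤ H := by omega
    have e1 : binF p = binF H + binF r + r := by
      have : p = H + r := by omega
      rw [this, binF_pow_add hrH]
    have e2 : binF (p+q) = binF H + binF (r+q) + (r+q) := by
      have : p + q = H + (r+q) := by omega
      rw [this, binF_pow_add hrqH]
    have hIH : binF r + binF q + min r q ≤ binF (r+q) := by
      rcases le_total q r with h'|h'
      · have := binF_superadd' (a := r) (b := q) h'
        omega
      · have hh := binF_superadd' (a := q) (b := r) h'
        rw [add_comm q r] at hh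
        omega
    have : 2*p - 2^M = 2*r := by omega
    rw [this]
    have hmin : min (2*r) (2*q) = 2 * min r q := by omega
    rw [hmin]
    omega

end AP
namespace AP
open Finset
variable {n : ℕ}

lemma eb_symm (X Y : Finset (Finset (Fin n))) : edgesBetween X Y = edgesBetween Y X := by
  unfold edgesBetween
  apply Finset.card_nbij' (fun p => (p.2, p.1)) (fun p => (p.2, p.1)) <;>
    simp +contextual [Set.MapsTo, Set.LeftInvOn, Set.RightInvOn, Finset.mem_filter, Finset.mem_product, symmDiff_comm]

lemma eb_union_left {X X' Y : Finset (Finset (Fin n))} (h : Disjoint X X') :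
    edgesBetween (X ∪ X') Y = edgesBetween X Y + edgesBetween X' Y := by
  unfold edgesBetween
  rw [Finset.union_product, Finset.filter_union]
  apply Finset.card_union_of_disjoint
  refine Finset.disjoint_filter_filter (Finset.disjoint_left.2 ?_)
  rintro ⟨a,b⟩ hab hab'
  simp only [Finset.mem_product] at hab hab'
  exact (Finset.disjoint_left.1 h) hab.1 hab'.1

lemma eb_union_right {X Y Y' : Finset (Finset (Fin n))} (h : Disjoint Y Y') :
    edgesBetween X (Y ∪ Y') = edgesBetween X Y + edgesBetween X Y' := by
  rw [eb_symm, eb_union_left h, eb_symm Y X, eb_symm Y' X]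

/-- counting edges from a fixed `x`. -/
lemma eb_singleton (x : Finset (Fin n)) (Y : Finset (Finset (Fin n))) :
    edgesBetween {x} Y = (Y.filter (fun y => (symmDiff x y).card = 1)).card := by
  unfold edgesBetween
  rw [Finset.card_filter, Finset.sum_product, Finset.sum_singleton, Finset.card_filter]

lemma eb_self_singleton (x : Finset (Fin n)) : edgesBetween {x} {x} = 0 := by
  rw [eb_singleton]
  convert Finset.card_empty
  rw [Finset.filter_eq_empty_iff]
  intro y hy
  simp only [Finset.mem_singleton] at hy
  subst hy
  simp

lemma eb_empty_left (Y : Finset (Finset (Fin n))) : edgesBetween ∅ Y = 0 := by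
  unfold edgesBetween
  simp

/-- the neighbourhood of `x ⊆ u` inside the powerset of `u` has size `u.card`. -/
lemma neighbor_count {u : Finset (Fin n)} {x : Finset (Fin n)} (hx : x ⊆ u) :
    ((u.powerset.filter (fun y => (symmDiff x y).card = 1))).card = u.card := by
  have himg : u.powerset.filter (fun y => (symmDiff x y).card = 1)
      = u.image (fun i => symmDiff x {i}) := by
    ext y
    simp only [Finset.mem_filter, Finset.mem_powerset, Finset.mem_image]
    constructor
    · rintro ⟨hyu, hcard⟩
      obtain ⟨i, hi⟩ := Finset.card_eq_one.1 hcard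
      refine ⟨i, ?_, ?_⟩
      · have : i ∈ symmDiff x y := by rw [hi]; exact Finset.mem_singleton_self i
        rw [Finset.mem_symmDiff] at this
        rcases this with ⟨h1,_⟩|⟨h1,_⟩
        · exact hx h1
        · exact hyu h1
      · rw [← hi]
        exact (symmDiff_symmDiff_cancel_left x y)
    · rintro ⟨i, hiu, rfl⟩
      constructor
      · intro a ha
        rw [Finset.mem_symmDiff] at ha
        rcases ha with ⟨h1,_⟩|⟨h1,_⟩
        · exact hx h1
        · rw [Finset.mem_singleton] at h1; subst h1; exact hiu
      · rw [symmDiff_symmDiff_cancel_left]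
        simp
  rw [himg]
  apply Finset.card_image_of_injOn
  intro i _ j _ hij
  have := congrArg (fun z => symmDiff x z) hij
  simp only [symmDiff_symmDiff_cancel_left] at this
  exact Finset.singleton_injective this

/-- handshake inside the powerset of `u`. -/
lemma eb_powerset {u : Finset (Fin n)} {B : Finset (Finset (Fin n))}
    (hB : ∀ x ∈ B, x ⊆ u) :
    edgesBetween B u.powerset = u.card * B.card := by
  unfold edgesBetween
  rw [Finset.card_filter, Finset.sum_product]
  rw [Finset.sum_congr rfl (fun x hx => ?_), Finset.sum_const, smul_eq_mul, mul_comm]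
  rw [← Finset.card_filter]
  exact neighbor_count (hB x hx)

end AP
namespace AP
open Finset
variable {n : ℕ}

lemma sd_symmDiff {s x y : Finset (Fin n)} (hx : x ⊆ s) (hy : y ⊆ s) :
    symmDiff (s \ x) (s \ y) = symmDiff x y := by
  ext a
  simp only [Finset.mem_symmDiff, Finset.mem_sdiff]
  have hxa := @hx a
  have hya := @hy a
  tauto

lemma symmDiff_erase {i : Fin n} {x y : Finset (Fin n)} (hx : i ∈ x) (hy : i ∈ y) :
    symmDiff (x.erase i) (y.erase i) = symmDiff x y := by
  ext a
  simp only [Finset.mem_symmDiff, Finset.mem_erase]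
  by_cases hai : a = i
  · subst hai; simp [hx, hy]
  · tauto

lemma mem_barOn_iff {s : Finset (Fin n)} {Y : Finset (Finset (Fin n))}
    (hY : ∀ y ∈ Y, y ⊆ s) {x : Finset (Fin n)} :
    x ∈ barOn s Y ↔ x ⊆ s ∧ s \ x ∈ Y := by
  unfold barOn
  simp only [Finset.mem_image]
  constructor
  · rintro ⟨z, hz, rfl⟩
    exact ⟨Finset.sdiff_subset, by rw [Finset.sdiff_sdiff_eq_self (hY z hz)]; exact hz⟩
  · rintro ⟨h1, h2⟩
    exact ⟨s \ x, h2, by rw [Finset.sdiff_sdiff_eq_self h1]⟩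

lemma barOn_members {s : Finset (Fin n)} {Y : Finset (Finset (Fin n))} :
    ∀ x ∈ barOn s Y, x ⊆ s := by
  intro x hx
  unfold barOn at hx
  simp only [Finset.mem_image] at hx
  obtain ⟨z, _, rfl⟩ := hx
  exact Finset.sdiff_subset

lemma card_barOn {s : Finset (Fin n)} {Y : Finset (Finset (Fin n))}
    (hY : ∀ y ∈ Y, y ⊆ s) : (barOn s Y).card = Y.card := by
  unfold barOn
  apply Finset.card_image_of_injOn
  intro a ha b hb hab
  simp only at hab
  have : s \ (s \ a) = s \ (s \ b) := by rw [hab]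
  rwa [Finset.sdiff_sdiff_eq_self (hY a ha), Finset.sdiff_sdiff_eq_self (hY b hb)] at this

/-- `x ↦ s \ x` as a bijection between `X ∩ W` and `(barOn s X) ∩ W`
for a `bar`-symmetric `W`. -/
lemma card_inter_barOn {s : Finset (Fin n)} {X W : Finset (Finset (Fin n))}
    (hX : ∀ x ∈ X, x ⊆ s) (hW : ∀ w ∈ W, w ⊆ s ∧ s \ w ∈ W) :
    (X ∩ W).card = ((barOn s X) ∩ W).card := by
  apply Finset.card_nbij' (fun x => s \ x) (fun x => s \ x)
  · intro a ha
    simp only [Finset.mem_coe, Finset.mem_inter] at ha ⊢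
    constructor
    · rw [mem_barOn_iff hX]
      exact ⟨Finset.sdiff_subset, by rw [Finset.sdiff_sdiff_eq_self (hX a ha.1)]; exact ha.1⟩
    · exact (hW a ha.2).2
  · intro a ha
    simp only [Finset.mem_coe, Finset.mem_inter] at ha ⊢
    rw [mem_barOn_iff hX] at ha
    exact ⟨ha.1.2, (hW a ha.2).2⟩
  · intro a ha
    simp only [Finset.mem_coe, Finset.mem_inter] at ha
    exact Finset.sdiff_sdiff_eq_self (hX a ha.1)
  · intro a ha
    simp only [Finset.mem_coe, Finset.mem_inter] at ha
    exact Finset.sdiff_sdiff_eq_self ((hW a ha.2).1)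

lemma barSym {s : Finset (Fin n)} {X Y : Finset (Finset (Fin n))}
    (hX : ∀ x ∈ X, x ⊆ s) (hY : ∀ y ∈ Y, y ⊆ s) :
    (X ∩ barOn s Y).card = (Y ∩ barOn s X).card := by
  apply Finset.card_nbij' (fun x => s \ x) (fun x => s \ x)
  · intro a ha
    simp only [Finset.mem_coe, Finset.mem_inter] at ha ⊢
    rw [mem_barOn_iff hY] at ha
    constructor
    · exact ha.2.2
    · rw [mem_barOn_iff hX]
      exact ⟨Finset.sdiff_subset, by rw [Finset.sdiff_sdiff_eq_self ha.2.1]; exact ha.1⟩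
  · intro a ha
    simp only [Finset.mem_coe, Finset.mem_inter] at ha ⊢
    rw [mem_barOn_iff hX] at ha
    constructor
    · exact ha.2.2
    · rw [mem_barOn_iff hY]
      exact ⟨Finset.sdiff_subset, by rw [Finset.sdiff_sdiff_eq_self ha.2.1]; exact ha.1⟩
  · intro a ha
    simp only [Finset.mem_coe, Finset.mem_inter] at ha
    rw [mem_barOn_iff hY] at ha
    exact Finset.sdiff_sdiff_eq_self ha.2.1
  · intro a ha
    simp only [Finset.mem_coe, Finset.mem_inter] at ha
    rw [mem_barOn_iff hX] at ha
    exact Finset.sdiff_sdiff_eq_self ha.2.1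

end AP
namespace AP
open Finset
variable {n : ℕ}

lemma SB {s : Finset (Fin n)} {X Y : Finset (Finset (Fin n))}
    (hX : ∀ x ∈ X, x ⊆ s) (hY : ∀ y ∈ Y, y ⊆ s) :
    2*(X ∩ Y).card + 2*(X ∩ barOn s Y).card ≤
      (Y ∪ barOn s Y).card + min (X ∩ barOn s X).card ((Y ∪ barOn s Y).card)
        + 2 * (Y ∩ barOn s Y).card := by
  set bX := barOn s X with hbX
  set bY := barOn s Y with hbY
  set SY := Y ∪ bY with hSY
  set TY := Y ∩ bY with hTY
  set TX := X ∩ bX with hTX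
  have hWS : ∀ w ∈ SY, w ⊆ s ∧ s \ w ∈ SY := by
    intro w hw
    rw [hSY, Finset.mem_union] at hw
    rcases hw with hw|hw
    · refine ⟨hY w hw, ?_⟩
      rw [Finset.mem_union, hbY]
      right
      exact Finset.mem_image_of_mem _ hw
    · rw [hbY, mem_barOn_iff hY] at hw
      exact ⟨hw.1, Finset.mem_union_left _ hw.2⟩
  have hWT : ∀ w ∈ TY, w ⊆ s ∧ s \ w ∈ TY := by
    intro w hw
    rw [hTY, Finset.mem_inter] at hw
    obtain ⟨hw1, hw2⟩ := hw
    rw [hbY, mem_barOn_iff hY] at hw2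
    refine ⟨hY w hw1, ?_⟩
    rw [hTY, Finset.mem_inter]
    refine ⟨hw2.2, ?_⟩
    rw [hbY, mem_barOn_iff hY]
    exact ⟨Finset.sdiff_subset, by rw [Finset.sdiff_sdiff_eq_self (hY w hw1)]; exact hw1⟩
  -- step a
  have ha : (X ∩ Y).card + (X ∩ bY).card = (X ∩ SY).card + (X ∩ TY).card := by
    have h1 : (X ∩ Y) ∪ (X ∩ bY) = X ∩ SY := (Finset.inter_union_distrib_left X Y bY).symm
    have h2 : (X ∩ Y) ∩ (X ∩ bY) = X ∩ TY := by
      rw [hTY]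
      ext a
      simp only [Finset.mem_inter]
      tauto
    rw [← h1, ← h2]
    exact (Finset.card_union_add_card_inter _ _).symm
  -- step b/c : double via bar bijection
  have hb : (X ∩ SY).card = (bX ∩ SY).card := card_inter_barOn hX hWS
  have hc : (X ∩ TY).card = (bX ∩ TY).card := card_inter_barOn hX hWT
  -- step d
  have hd : (X ∩ SY).card + (bX ∩ SY).card = ((X ∪ bX) ∩ SY).card + (TX ∩ SY).card := by
    have h1 : (X ∩ SY) ∪ (bX ∩ SY) = (X ∪ bX) ∩ SY :=
      (Finset.union_inter_distrib_right X bX SY).symm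
    have h2 : (X ∩ SY) ∩ (bX ∩ SY) = TX ∩ SY := by
      rw [hTX]
      ext a
      simp only [Finset.mem_inter]
      tauto
    rw [← h1, ← h2]
    exact (Finset.card_union_add_card_inter _ _).symm
  have he : (X ∩ TY).card + (bX ∩ TY).card = ((X ∪ bX) ∩ TY).card + (TX ∩ TY).card := by
    have h1 : (X ∩ TY) ∪ (bX ∩ TY) = (X ∪ bX) ∩ TY :=
      (Finset.union_inter_distrib_right X bX TY).symm
    have h2 : (X ∩ TY) ∩ (bX ∩ TY) = TX ∩ TY := by
      rw [hTX]
      ext a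
      simp only [Finset.mem_inter]
      tauto
    rw [← h1, ← h2]
    exact (Finset.card_union_add_card_inter _ _).symm
  -- bounds
  have hb1 : ((X ∪ bX) ∩ SY).card ≤ SY.card := Finset.card_le_card (Finset.inter_subset_right)
  have hb2 : (TX ∩ SY).card ≤ min TX.card SY.card := by
    refine le_min (Finset.card_le_card Finset.inter_subset_left)
      (Finset.card_le_card Finset.inter_subset_right)
  have hb3 : ((X ∪ bX) ∩ TY).card ≤ TY.card := Finset.card_le_card (Finset.inter_subset_right)
  have hb4 : (TX ∩ TY).card ≤ TY.card := Finset.card_le_card (Finset.inter_subset_right)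
  omega

lemma core {s : Finset (Fin n)}
    (hML : ∀ Z : Finset (Finset (Fin n)), (∀ x ∈ Z, x ⊆ s) →
      edgesBetween Z Z + (Z ∩ barOn s Z).card ≤ 2 * binF Z.card + (2*Z.card - 2^s.card))
    {X Y : Finset (Finset (Fin n))}
    (hX : ∀ x ∈ X, x ⊆ s) (hY : ∀ y ∈ Y, y ⊆ s)
    (hq : Y.card ≤ X.card) (hsum : X.card + Y.card ≤ 2^s.card) :
    edgesBetween X X + edgesBetween Y Y + 2*(X ∩ Y).card + 2*(X ∩ barOn s Y).card ≤
      2 * binF (X.card + Y.card) := by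
  have h1 := hML X hX
  have h2 := hML Y hY
  have hSB := SB hX hY
  have hSY : (Y ∪ barOn s Y).card + (Y ∩ barOn s Y).card = 2 * Y.card := by
    rw [Finset.card_union_add_card_inter, card_barOn hY]
    omega
  have hTX : 2 * X.card ≤ (X ∩ barOn s X).card + 2^s.card := by
    have e1 : (X ∪ barOn s X).card + (X ∩ barOn s X).card = 2 * X.card := by
      rw [Finset.card_union_add_card_inter, card_barOn hX]
      omega
    have e2 : (X ∪ barOn s X).card ≤ 2^s.card := by
      have hsub : X ∪ barOn s X ⊆ s.powerset := by
        intro a ha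
        rw [Finset.mem_union] at ha
        rw [Finset.mem_powerset]
        rcases ha with ha|ha
        · exact hX a ha
        · exact barOn_members a ha
      have := Finset.card_le_card hsub
      rwa [Finset.card_powerset] at this
    omega
  have hAL := AL hq hsum
  omega

end AP
namespace AP
open Finset
variable {n : ℕ}

lemma symmDiff_insert_insert {i : Fin n} {x y : Finset (Fin n)} (hx : i ∉ x) (hy : i ∉ y) :
    symmDiff (insert i x) (insert i y) = symmDiff x y := by
  ext a
  simp only [Finset.mem_symmDiff, Finset.mem_insert]
  by_cases hai : a = i
  · subst hai; simp [hx, hy]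
  · tauto

lemma adj_forced {i : Fin n} {x y : Finset (Fin n)} (hx : i ∉ x) (hy : i ∈ y)
    (h : (symmDiff x y).card = 1) : y = insert i x := by
  obtain ⟨j, hj⟩ := Finset.card_eq_one.1 h
  have hij : i ∈ symmDiff x y := by
    rw [Finset.mem_symmDiff]; right; exact ⟨hy, hx⟩
  rw [hj, Finset.mem_singleton] at hij
  subst hij
  have h2 : y = symmDiff x (symmDiff x y) := (symmDiff_symmDiff_cancel_left x y).symm
  rw [hj] at h2
  rw [h2]
  ext a
  simp only [Finset.mem_symmDiff, Finset.mem_singleton, Finset.mem_insert]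
  by_cases hai : a = i
  · subst hai; simp [hx]
  · tauto

lemma symmDiff_with_insert {i : Fin n} {x : Finset (Fin n)} (hx : i ∉ x) :
    symmDiff x (insert i x) = {i} := by
  ext a
  simp only [Finset.mem_symmDiff, Finset.mem_insert, Finset.mem_singleton]
  by_cases hai : a = i
  · subst hai; simp [hx]
  · tauto

lemma eb_erase {i : Fin n} {X Y : Finset (Finset (Fin n))}
    (hX : ∀ x ∈ X, i ∈ x) (hY : ∀ y ∈ Y, i ∈ y) :
    edgesBetween (X.image (fun x => x.erase i)) (Y.image (fun y => y.erase i))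
      = edgesBetween X Y := by
  unfold edgesBetween
  symm
  apply Finset.card_nbij' (fun p => (p.1.erase i, p.2.erase i))
    (fun p => (insert i p.1, insert i p.2))
  · rintro ⟨x,y⟩ h
    simp only [Finset.mem_coe, Finset.mem_filter, Finset.mem_product] at h ⊢
    refine ⟨⟨Finset.mem_image_of_mem _ h.1.1, Finset.mem_image_of_mem _ h.1.2⟩, ?_⟩
    rw [symmDiff_erase (hX x h.1.1) (hY y h.1.2)]
    exact h.2
  · rintro ⟨x,y⟩ h
    simp only [Finset.mem_coe, Finset.mem_filter, Finset.mem_product, Finset.mem_image] at h ⊢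
    obtain ⟨⟨⟨x', hx', rfl⟩, ⟨y', hy', rfl⟩⟩, hc⟩ := h
    rw [Finset.insert_erase (hX x' hx'), Finset.insert_erase (hY y' hy')]
    refine ⟨⟨hx', hy'⟩, ?_⟩
    rwa [symmDiff_erase (hX x' hx') (hY y' hy')] at hc
  · rintro ⟨x,y⟩ h
    simp only [Finset.mem_coe, Finset.mem_filter, Finset.mem_product] at h
    simp only [Finset.insert_erase (hX x h.1.1), Finset.insert_erase (hY y h.1.2)]
  · rintro ⟨x,y⟩ h
    simp only [Finset.mem_coe, Finset.mem_filter, Finset.mem_product, Finset.mem_image] at h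
    obtain ⟨⟨⟨x', hx', rfl⟩, ⟨y', hy', rfl⟩⟩, _⟩ := h
    simp only [Finset.erase_insert_eq_erase, Finset.erase_idem]

lemma eb_cross {i : Fin n} {X Y' : Finset (Finset (Fin n))}
    (hX : ∀ x ∈ X, i ∉ x) (hY : ∀ y ∈ Y', i ∈ y) :
    edgesBetween X Y' = (X.filter (fun x => insert i x ∈ Y')).card := by
  unfold edgesBetween
  apply Finset.card_nbij' (fun p => p.1) (fun x => (x, insert i x))
  · rintro ⟨x,y⟩ h
    simp only [Finset.mem_coe, Finset.mem_filter, Finset.mem_product] at h ⊢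
    obtain ⟨⟨hx, hy⟩, hc⟩ := h
    have := adj_forced (hX x hx) (hY y hy) hc
    subst this
    exact ⟨hx, hy⟩
  · intro x h
    simp only [Finset.mem_coe, Finset.mem_filter, Finset.mem_product] at h ⊢
    refine ⟨⟨h.1, h.2⟩, ?_⟩
    rw [symmDiff_with_insert (hX x h.1)]
    simp
  · rintro ⟨x,y⟩ h
    simp only [Finset.mem_coe, Finset.mem_filter, Finset.mem_product] at h
    obtain ⟨⟨hx, hy⟩, hc⟩ := h
    have := adj_forced (hX x hx) (hY y hy) hc
    simp [this]
  · intro x h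
    rfl

lemma filter_insert_eq_inter {i : Fin n} {X Y' : Finset (Finset (Fin n))}
    (hX : ∀ x ∈ X, i ∉ x) (hY : ∀ y ∈ Y', i ∈ y) :
    X.filter (fun x => insert i x ∈ Y') = X ∩ (Y'.image (fun y => y.erase i)) := by
  ext x
  simp only [Finset.mem_filter, Finset.mem_inter, Finset.mem_image]
  constructor
  · rintro ⟨hx, hins⟩
    refine ⟨hx, insert i x, hins, ?_⟩
    rw [Finset.erase_insert (hX x hx)]
  · rintro ⟨hx, y, hy, rfl⟩
    refine ⟨hx, ?_⟩
    rwa [Finset.insert_erase (hY y hy)]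

end AP
namespace AP
open Finset
variable {n : ℕ}

lemma cons_sdiff_eq {i : Fin n} {s x : Finset (Fin n)} (hi : i ∉ s) (hx : i ∉ x) :
    (Finset.cons i s hi) \ x = insert i (s \ x) := by
  ext a
  simp only [Finset.mem_sdiff, Finset.cons_eq_insert, Finset.mem_insert]
  by_cases hai : a = i
  · subst hai; tauto
  · tauto

lemma ML (s : Finset (Fin n)) :
    ∀ A : Finset (Finset (Fin n)), (∀ x ∈ A, x ⊆ s) →
      edgesBetween A A + (A ∩ barOn s A).card ≤
        2 * binF A.card + (2 * A.card - 2 ^ s.card) := by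
  induction s using Finset.cons_induction with
  | empty =>
    intro A hA
    have hsub : A ⊆ {∅} := by
      intro x hx
      rw [Finset.mem_singleton]
      exact Finset.subset_empty.1 (hA x hx)
    rcases Finset.subset_singleton_iff.1 hsub with rfl|rfl
    · simp [eb_empty_left]
    · have h1 : edgesBetween {(∅ : Finset (Fin n))} {∅} = 0 := eb_self_singleton _
      have h2 : (({∅} : Finset (Finset (Fin n))) ∩ barOn ∅ {∅}).card ≤ 1 := by
        have h3 : (({∅}:Finset (Finset (Fin n))) ∩ barOn ∅ {∅}).card ≤
            ({∅}:Finset (Finset (Fin n))).card := Finset.card_le_card Finset.inter_subset_left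
        simpa using h3
      simp only [Finset.card_singleton, Finset.card_empty, pow_zero]
      omega
  | cons i s hi IH =>
    have small : ∀ B : Finset (Finset (Fin n)), (∀ x ∈ B, x ⊆ Finset.cons i s hi) →
        2 * B.card ≤ 2 ^ (Finset.cons i s hi).card →
        edgesBetween B B + (B ∩ barOn (Finset.cons i s hi) B).card ≤ 2 * binF B.card := by
      intro B hB hBsmall
      set u := Finset.cons i s hi with hu
      have hucard : u.card = s.card + 1 := Finset.card_cons hi
      set B0 := B.filter (fun x => i ∉ x) with hB0
      set B1' := B.filter (fun x => i ∈ x) with hB1'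
      set B1 := B1'.image (fun x => x.erase i) with hB1
      have f0' : ∀ x ∈ B0, i ∉ x := by
        intro x hx; rw [hB0, Finset.mem_filter] at hx; exact hx.2
      have f1' : ∀ y ∈ B1', i ∈ y := by
        intro y hy; rw [hB1', Finset.mem_filter] at hy; exact hy.2
      have fB0B : ∀ x ∈ B0, x ∈ B := by
        intro x hx; rw [hB0, Finset.mem_filter] at hx; exact hx.1
      have fB1B : ∀ x ∈ B1', x ∈ B := by
        intro x hx; rw [hB1', Finset.mem_filter] at hx; exact hx.1
      have f0 : ∀ x ∈ B0, x ⊆ s := by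
        intro x hx a ha
        have h2 := hB x (fB0B x hx) ha
        rw [hu, Finset.mem_cons] at h2
        rcases h2 with rfl|h2
        · exact absurd ha (f0' x hx)
        · exact h2
      have f1 : ∀ x ∈ B1, x ⊆ s := by
        intro x hx
        rw [hB1, Finset.mem_image] at hx
        obtain ⟨y, hy, rfl⟩ := hx
        intro a ha
        rw [Finset.mem_erase] at ha
        have h2 := hB y (fB1B y hy) ha.2
        rw [hu, Finset.mem_cons] at h2
        rcases h2 with rfl|h2
        · exact absurd rfl ha.1
        · exact h2
      have fdisj : Disjoint B1' B0 := by
        rw [hB0, hB1']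
        exact Finset.disjoint_filter_filter_not B B _
      have funion : B1' ∪ B0 = B := by
        rw [hB0, hB1']
        exact Finset.filter_union_filter_not_eq _ B
      have hc1 : B1.card = B1'.card := by
        rw [hB1]
        apply Finset.card_image_of_injOn
        intro a ha b hb hab
        simp only at hab
        have : insert i (a.erase i) = insert i (b.erase i) := by rw [hab]
        rwa [Finset.insert_erase (f1' a ha), Finset.insert_erase (f1' b hb)] at this
      have hcards : B1'.card + B0.card = B.card := by
        rw [← Finset.card_union_of_disjoint fdisj, funion]
      have D1 : edgesBetween B B = edgesBetween B1' B1' + edgesBetween B1' B0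
          + (edgesBetween B0 B1' + edgesBetween B0 B0) := by
        conv_lhs => rw [← funion]
        rw [eb_union_left fdisj, eb_union_right fdisj, eb_union_right fdisj]
      have D1b : edgesBetween B1 B1 = edgesBetween B1' B1' := eb_erase f1' f1'
      have D1c : edgesBetween B0 B1' = (B0 ∩ B1).card := by
        rw [eb_cross f0' f1', filter_insert_eq_inter f0' f1']
      have D1d : edgesBetween B1' B0 = edgesBetween B0 B1' := eb_symm _ _
      -- D2
      have e1 : B ∩ barOn u B = B.filter (fun x => u \ x ∈ B) := by
        ext x
        rw [Finset.mem_inter, mem_barOn_iff hB, Finset.mem_filter]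
        constructor
        · rintro ⟨h1, _, h3⟩; exact ⟨h1, h3⟩
        · rintro ⟨h1, h2⟩; exact ⟨h1, hB x h1, h2⟩
      have e2 : (B.filter (fun x => u \ x ∈ B)).filter (fun x => i ∉ x)
          = B0 ∩ barOn s B1 := by
        ext x
        rw [Finset.mem_filter, Finset.mem_filter, Finset.mem_inter, mem_barOn_iff f1]
        constructor
        · rintro ⟨⟨hxB, hux⟩, hix⟩
          have hxs : x ⊆ s := by
            intro a ha
            have h2 := hB x hxB ha
            rw [hu, Finset.mem_cons] at h2
            rcases h2 with rfl|h2
            · exact absurd ha hix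
            · exact h2
          refine ⟨by rw [hB0, Finset.mem_filter]; exact ⟨hxB, hix⟩, hxs, ?_⟩
          have hsd : u \ x = insert i (s \ x) := by rw [hu]; exact cons_sdiff_eq hi hix
          have hmem1 : u \ x ∈ B1' := by
            rw [hB1', Finset.mem_filter]
            refine ⟨hux, ?_⟩
            rw [hsd]; exact Finset.mem_insert_self i _
          have hins : i ∉ s \ x := fun h => hi (Finset.mem_sdiff.1 h).1
          have : (u \ x).erase i = s \ x := by rw [hsd, Finset.erase_insert hins]
          rw [hB1, ← this]
          exact Finset.mem_image_of_mem _ hmem1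
        · rintro ⟨hx0, hxs, hsx⟩
          have hix := f0' x hx0
          refine ⟨⟨fB0B x hx0, ?_⟩, hix⟩
          rw [hB1, Finset.mem_image] at hsx
          obtain ⟨y, hy, hye⟩ := hsx
          have hsd : u \ x = insert i (s \ x) := by rw [hu]; exact cons_sdiff_eq hi hix
          rw [hsd, ← hye, Finset.insert_erase (f1' y hy)]
          exact fB1B y hy
      have e3 : ((B.filter (fun x => u \ x ∈ B)).filter (fun x => i ∈ x)).card
          = ((B.filter (fun x => u \ x ∈ B)).filter (fun x => i ∉ x)).card := by
        apply Finset.card_nbij' (fun x => u \ x) (fun x => u \ x)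
        · intro x hx
          rw [Finset.mem_coe, Finset.mem_filter, Finset.mem_filter] at hx
          obtain ⟨⟨hxB, hux⟩, hix⟩ := hx
          simp only [Finset.mem_coe, Finset.mem_filter]
          refine ⟨⟨hux, ?_⟩, ?_⟩
          · rw [Finset.sdiff_sdiff_eq_self (hB x hxB)]; exact hxB
          · intro h
            exact (Finset.mem_sdiff.1 h).2 hix
        · intro x hx
          rw [Finset.mem_coe, Finset.mem_filter, Finset.mem_filter] at hx
          obtain ⟨⟨hxB, hux⟩, hix⟩ := hx
          simp only [Finset.mem_coe, Finset.mem_filter]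
          refine ⟨⟨hux, ?_⟩, ?_⟩
          · rw [Finset.sdiff_sdiff_eq_self (hB x hxB)]; exact hxB
          · rw [Finset.mem_sdiff]
            refine ⟨by rw [hu]; exact Finset.mem_cons_self i s, hix⟩
        · intro x hx
          rw [Finset.mem_coe, Finset.mem_filter, Finset.mem_filter] at hx
          exact Finset.sdiff_sdiff_eq_self (hB x hx.1.1)
        · intro x hx
          rw [Finset.mem_coe, Finset.mem_filter, Finset.mem_filter] at hx
          exact Finset.sdiff_sdiff_eq_self (hB x hx.1.1)
      have e2c : ((B.filter (fun x => u \ x ∈ B)).filter (fun x => i ∉ x)).card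
          = (B0 ∩ barOn s B1).card := by rw [e2]
      have e4 := Finset.card_filter_add_card_filter_not
          (s := B.filter (fun x => u \ x ∈ B)) (p := fun x => i ∈ x)
      have D2 : (B ∩ barOn u B).card = 2 * (B0 ∩ barOn s B1).card := by
        rw [e1]
        omega
      have hsum : B0.card + B1.card ≤ 2 ^ s.card := by
        rw [hucard, pow_succ] at hBsmall
        omega
      rcases le_total B1.card B0.card with hord|hord
      · have hcore := core IH f0 f1 hord (by omega)
        have hbc : B0.card + B1.card = B.card := by omega
        rw [hbc] at hcore
        omega
      · have hcore := core IH f1 f0 hord (by omega)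
        have hi1 : (B1 ∩ B0).card = (B0 ∩ B1).card := by rw [Finset.inter_comm]
        have hi2 : (B1 ∩ barOn s B0).card = (B0 ∩ barOn s B1).card := barSym f1 f0
        have hbc : B1.card + B0.card = B.card := by omega
        rw [hbc] at hcore
        omega
    intro A hA
    rcases le_or_gt (2 * A.card) (2 ^ (Finset.cons i s hi).card) with hsm|hbig
    · have h := small A hA hsm
      omega
    · set u := Finset.cons i s hi with hu
      set P := u.powerset with hP
      set A' := P \ A with hA'
      have hApow : A ⊆ P := by
        intro x hx; rw [hP, Finset.mem_powerset]; exact hA x hx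
      have hA'mem : ∀ x ∈ A', x ⊆ u := by
        intro x hx
        rw [hA', Finset.mem_sdiff, hP, Finset.mem_powerset] at hx
        exact hx.1
      have hcardP : P.card = 2 ^ u.card := by rw [hP, Finset.card_powerset]
      have hAcard : A.card ≤ 2 ^ u.card := by
        rw [← hcardP]; exact Finset.card_le_card hApow
      have hA'card : A'.card + A.card = 2 ^ u.card := by
        rw [hA', Finset.card_sdiff_of_subset hApow, hcardP]
        have := Finset.card_le_card hApow
        omega
      have hsm' := small A' hA'mem (by omega)
      have hdisj : Disjoint A A' := Finset.disjoint_sdiff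
      have hun : A ∪ A' = P := Finset.union_sdiff_of_subset hApow
      have hebP : edgesBetween P P = u.card * 2 ^ u.card := by
        have h := eb_powerset (u := u) (B := P) (fun x hx => by
          rw [hP, Finset.mem_powerset] at hx; exact hx)
        rw [← hP] at h
        rw [h, hcardP]
      have hsplit : edgesBetween P P = edgesBetween A A + edgesBetween A A'
          + (edgesBetween A' A + edgesBetween A' A') := by
        rw [← hun, eb_union_left hdisj, eb_union_right hdisj, eb_union_right hdisj]
      have hA'P : edgesBetween A' P = u.card * A'.card := by
        have h := eb_powerset (u := u) hA'mem
        rwa [← hP] at h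
      have hA'split : edgesBetween A' P = edgesBetween A' A + edgesBetween A' A' := by
        rw [← hun, eb_union_right hdisj]
      have hebsym : edgesBetween A A' = edgesBetween A' A := eb_symm _ _
      -- C2 pieces
      have me1 : A ∩ barOn u A = A.filter (fun x => u \ x ∈ A) := by
        ext x
        rw [Finset.mem_inter, mem_barOn_iff hA, Finset.mem_filter]
        constructor
        · rintro ⟨h1, _, h3⟩; exact ⟨h1, h3⟩
        · rintro ⟨h1, h2⟩; exact ⟨h1, hA x h1, h2⟩
      have me2 : A' ∩ barOn u A' = A'.filter (fun x => u \ x ∈ A') := by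
        ext x
        rw [Finset.mem_inter, mem_barOn_iff hA'mem, Finset.mem_filter]
        constructor
        · rintro ⟨h1, _, h3⟩; exact ⟨h1, h3⟩
        · rintro ⟨h1, h2⟩; exact ⟨h1, hA'mem x h1, h2⟩
      have me3 : (A.filter (fun x => u \ x ∈ A)).card
          + (A.filter (fun x => u \ x ∈ A')).card = A.card := by
        have hcong : A.filter (fun x => u \ x ∈ A') = A.filter (fun x => ¬ (u \ x ∈ A)) := by
          apply Finset.filter_congr
          intro x hx
          have hmem : u \ x ∈ P := by rw [hP, Finset.mem_powerset]; exact Finset.sdiff_subset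
          rw [hA', Finset.mem_sdiff]
          simp [hmem]
        rw [hcong, Finset.card_filter_add_card_filter_not]
      have me4 : (A'.filter (fun x => u \ x ∈ A')).card
          + (A'.filter (fun x => u \ x ∈ A)).card = A'.card := by
        have hcong : A'.filter (fun x => u \ x ∈ A) = A'.filter (fun x => ¬ (u \ x ∈ A')) := by
          apply Finset.filter_congr
          intro x hx
          have hmem : u \ x ∈ P := by rw [hP, Finset.mem_powerset]; exact Finset.sdiff_subset
          rw [hA', Finset.mem_sdiff]
          simp [hmem]
        rw [hcong, Finset.card_filter_add_card_filter_not]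
      have me5 : (A.filter (fun x => u \ x ∈ A')).card
          = (A'.filter (fun x => u \ x ∈ A)).card := by
        apply Finset.card_nbij' (fun x => u \ x) (fun x => u \ x)
        · intro x hx
          rw [Finset.mem_coe, Finset.mem_filter] at hx
          simp only [Finset.mem_coe, Finset.mem_filter]
          refine ⟨hx.2, ?_⟩
          rw [Finset.sdiff_sdiff_eq_self (hA x hx.1)]
          exact hx.1
        · intro x hx
          rw [Finset.mem_coe, Finset.mem_filter] at hx
          simp only [Finset.mem_coe, Finset.mem_filter]
          refine ⟨hx.2, ?_⟩
          rw [Finset.sdiff_sdiff_eq_self (hA'mem x hx.1)]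
          exact hx.1
        · intro x hx
          rw [Finset.mem_coe, Finset.mem_filter] at hx
          exact Finset.sdiff_sdiff_eq_self (hA x hx.1)
        · intro x hx
          rw [Finset.mem_coe, Finset.mem_filter] at hx
          exact Finset.sdiff_sdiff_eq_self (hA'mem x hx.1)
      have hK4 : binF A.card + u.card * A'.card = binF (2 ^ u.card) + binF A'.card := by
        have h2 : 2 ^ u.card - A'.card = A.card := by omega
        calc binF A.card + u.card * A'.card
            = binF (2 ^ u.card - A'.card) + u.card * A'.card := by rw [h2]
          _ = binF (2 ^ u.card) + binF A'.card := binF_compl (by omega)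
      have hK3 : 2 * binF (2 ^ u.card) = u.card * 2 ^ u.card := binF_pow _
      have hc2a : (A ∩ barOn u A).card = (A.filter (fun x => u \ x ∈ A)).card := by rw [me1]
      have hc2b : (A' ∩ barOn u A').card = (A'.filter (fun x => u \ x ∈ A')).card := by
        rw [me2]
      generalize hUA : u.card * A'.card = UA at hA'P hK4
      generalize hUP : u.card * 2 ^ u.card = UP at hebP hK3
      omega
end AP
namespace AP
open Finset
variable {n : ℕ}

def chi (x : Finset (Fin n)) : Fin n → Fin 2 := fun i => if i ∈ x then 1 else 0

lemma setToNat_eq (x : Finset (Fin n)) : setToNat x = (finFunctionFinEquiv (chi x) : ℕ) := by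
  rw [finFunctionFinEquiv_apply]
  unfold setToNat
  rw [← Finset.sum_filter_add_sum_filter_not Finset.univ (fun i => i ∈ x)
    (fun i => ((chi x i : ℕ) * 2 ^ (i : ℕ)))]
  have h1 : Finset.univ.filter (fun i => i ∈ x) = x := by
    ext i; simp
  have h2 : ∀ i ∈ x, (chi x i : ℕ) * 2 ^ (i:ℕ) = 2 ^ (i:ℕ) := by
    intro i hi; simp [chi, hi]
  have h3 : ∀ i ∈ Finset.univ.filter (fun i => ¬ i ∈ x), (chi x i : ℕ) * 2 ^ (i:ℕ) = 0 := by
    intro i hi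
    rw [Finset.mem_filter] at hi
    simp [chi, hi.2]
  rw [Finset.sum_congr h1 h2, Finset.sum_congr rfl h3]
  simp

lemma setToNat_lt (x : Finset (Fin n)) : setToNat x < 2 ^ n := by
  rw [setToNat_eq]
  have := (finFunctionFinEquiv (chi x)).isLt
  simpa using this

lemma setToNat_inj {x y : Finset (Fin n)} (h : setToNat x = setToNat y) : x = y := by
  rw [setToNat_eq, setToNat_eq] at h
  have h2 : finFunctionFinEquiv (chi x) = finFunctionFinEquiv (chi y) := Fin.ext h
  have h3 : chi x = chi y := finFunctionFinEquiv.injective h2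
  ext i
  have h4 := congrFun h3 i
  unfold chi at h4
  by_cases hx : i ∈ x <;> by_cases hy : i ∈ y <;> simp [hx, hy] at h4 ⊢

lemma setToNat_surj {v : ℕ} (hv : v < 2 ^ n) : ∃ x : Finset (Fin n), setToNat x = v := by
  set f := finFunctionFinEquiv.symm (⟨v, by simpa using hv⟩ : Fin (2 ^ n)) with hf
  refine ⟨Finset.univ.filter (fun i => f i = 1), ?_⟩
  have hchi : chi (Finset.univ.filter (fun i => f i = 1)) = f := by
    funext i
    have h2 : (f i : ℕ) < 2 := (f i).isLt
    unfold chi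
    by_cases h : f i = 1
    · simp [h]
    · have h0 : f i = 0 := by
        apply Fin.ext
        have h3 : (f i : ℕ) ≠ 1 := fun hc => h (Fin.ext hc)
        simp only [Fin.val_zero]
        omega
      simp [h, h0]
  rw [setToNat_eq, hchi, hf, Equiv.apply_symm_apply]

lemma sum_two_pow_range (t : ℕ) : (∑ i ∈ Finset.range t, 2 ^ i) + 1 = 2 ^ t := by
  induction t with
  | zero => simp
  | succ t ih =>
    rw [Finset.sum_range_succ, pow_succ]
    omega

lemma setToNat_compl (x : Finset (Fin n)) : setToNat x + setToNat xᶜ + 1 = 2 ^ n := by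
  have h1 : setToNat x + setToNat xᶜ = ∑ i : Fin n, 2 ^ (i:ℕ) := by
    unfold setToNat
    rw [Finset.sum_add_sum_compl]
  rw [h1]
  rw [Fin.sum_univ_eq_sum_range (fun i => 2 ^ i) n]
  exact sum_two_pow_range n

lemma setToNat_bound {x : Finset (Fin n)} {t : ℕ} (h : ∀ i ∈ x, (i : ℕ) < t) :
    setToNat x < 2 ^ t := by
  unfold setToNat
  have h1 : ∑ i ∈ x, 2 ^ (i:ℕ) = ∑ j ∈ x.image (fun i : Fin n => (i : ℕ)), 2 ^ j := by
    rw [Finset.sum_image]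
    intro a _ b _ hab
    exact Fin.ext hab
  rw [h1]
  have h2 : x.image (fun i : Fin n => (i : ℕ)) ⊆ Finset.range t := by
    intro j hj
    rw [Finset.mem_image] at hj
    obtain ⟨i, hi, rfl⟩ := hj
    rw [Finset.mem_range]
    exact h i hi
  have h3 : (∑ j ∈ x.image (fun i : Fin n => (i : ℕ)), 2 ^ j) ≤ ∑ j ∈ Finset.range t, 2 ^ j :=
    Finset.sum_le_sum_of_subset h2
  have h4 := sum_two_pow_range t
  omega

lemma setToNat_erase {x : Finset (Fin n)} {i : Fin n} (h : i ∈ x) :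
    setToNat (x.erase i) + 2 ^ (i : ℕ) = setToNat x := by
  unfold setToNat
  exact Finset.sum_erase_add x _ h

lemma setToNat_insert {x : Finset (Fin n)} {i : Fin n} (h : i ∉ x) :
    setToNat (insert i x) = 2 ^ (i : ℕ) + setToNat x := by
  unfold setToNat
  exact Finset.sum_insert h

lemma card_ds : ∀ v : ℕ, ∀ x : Finset (Fin n), setToNat x = v → ds v = x.card := by
  intro v
  induction v using Nat.strong_induction_on with
  | _ v IH =>
    intro x hx
    rcases Finset.eq_empty_or_nonempty x with rfl|hne
    · have : v = 0 := by rw [← hx]; simp [setToNat]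
      subst this
      simp [ds]
    · set a := x.max' hne with ha
      have hmem : a ∈ x := x.max'_mem hne
      have herase : ∀ i ∈ x.erase a, (i:ℕ) < (a:ℕ) := by
        intro i hi
        rw [Finset.mem_erase] at hi
        have := x.le_max' i hi.2
        have hne2 : i ≠ a := hi.1
        have : (i:ℕ) ≤ (a:ℕ) := this
        rcases lt_or_eq_of_le this with h|h
        · exact h
        · exact absurd (Fin.ext h) hne2
      have hvb := setToNat_bound herase
      have hval := setToNat_erase hmem
      set w := setToNat (x.erase a) with hw
      have hv : v = 2 ^ (a:ℕ) + w := by omega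
      have hds : ds v = 1 + ds w := by rw [hv]; exact ds_pow_add hvb
      have hcard : (x.erase a).card + 1 = x.card := by
        rw [Finset.card_erase_of_mem hmem]
        have := Finset.card_pos.2 ⟨a, hmem⟩
        omega
      have hIH := IH w (by have := pow_pos (by norm_num : (0:ℕ) < 2) (a:ℕ); omega)
        (x.erase a) rfl
      omega

lemma mem_iseg {k : ℕ} {x : Finset (Fin n)} : x ∈ iseg n k ↔ setToNat x < k := by
  unfold iseg
  simp

end AP
namespace AP
open Finset
variable {n : ℕ}

lemma mem_barFam {X : Finset (Finset (Fin n))} {x : Finset (Fin n)} :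
    x ∈ barFam X ↔ xᶜ ∈ X := by
  unfold barFam
  rw [Finset.mem_image]
  constructor
  · rintro ⟨y, hy, rfl⟩; rwa [compl_compl]
  · intro h; exact ⟨xᶜ, h, compl_compl x⟩

lemma card_barFam (X : Finset (Finset (Fin n))) : (barFam X).card = X.card :=
  Finset.card_image_of_injective X compl_injective

lemma eb_barFam (X Y : Finset (Finset (Fin n))) :
    edgesBetween (barFam X) (barFam Y) = edgesBetween X Y := by
  unfold edgesBetween
  symm
  apply Finset.card_nbij' (fun p => (p.1ᶜ, p.2ᶜ)) (fun p => (p.1ᶜ, p.2ᶜ))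
  · rintro ⟨x,y⟩ h
    simp only [Finset.mem_coe, Finset.mem_filter, Finset.mem_product] at h ⊢
    obtain ⟨⟨h1, h2⟩, h3⟩ := h
    refine ⟨⟨mem_barFam.2 (by rwa [compl_compl]), mem_barFam.2 (by rwa [compl_compl])⟩, ?_⟩
    rw [compl_symmDiff_compl]; exact h3
  · rintro ⟨x,y⟩ h
    simp only [Finset.mem_coe, Finset.mem_filter, Finset.mem_product] at h ⊢
    obtain ⟨⟨h1, h2⟩, h3⟩ := h
    rw [mem_barFam] at h1 h2
    refine ⟨⟨h1, h2⟩, ?_⟩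
    rw [compl_symmDiff_compl]; exact h3
  · rintro ⟨x,y⟩ _; simp
  · rintro ⟨x,y⟩ _; simp

lemma iseg_zero : iseg n 0 = ∅ := by
  ext x; simp [mem_iseg]

lemma iseg_succ {k : ℕ} (hk : k < 2^n) : ∃ x : Finset (Fin n), setToNat x = k ∧
    iseg n (k+1) = insert x (iseg n k) ∧ x ∉ iseg n k := by
  obtain ⟨x, hx⟩ := setToNat_surj hk
  refine ⟨x, hx, ?_, by rw [mem_iseg]; omega⟩
  ext y
  rw [Finset.mem_insert, mem_iseg, mem_iseg]
  constructor
  · intro h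
    rcases Nat.lt_succ_iff_lt_or_eq.1 h with h|h
    · right; exact h
    · left; exact setToNat_inj (by rw [hx]; exact h)
  · rintro (rfl|h)
    · omega
    · omega

lemma card_iseg {k : ℕ} (hk : k ≤ 2^n) : (iseg n k).card = k := by
  induction k with
  | zero => rw [iseg_zero]; simp
  | succ k ih =>
    obtain ⟨x, _, hins, hnot⟩ := iseg_succ (by omega : k < 2^n)
    rw [hins, Finset.card_insert_of_notMem hnot, ih (by omega)]

lemma eb_point {k : ℕ} {x : Finset (Fin n)} (hx : setToNat x = k) :
    edgesBetween {x} (iseg n k) = x.card := by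
  rw [eb_singleton]
  have himg : (iseg n k).filter (fun y => (symmDiff x y).card = 1)
      = x.image (fun i => x.erase i) := by
    ext y
    simp only [Finset.mem_filter, Finset.mem_image, mem_iseg]
    constructor
    · rintro ⟨hyk, hc⟩
      obtain ⟨j, hj⟩ := Finset.card_eq_one.1 hc
      have hjmem : j ∈ symmDiff x y := by rw [hj]; exact Finset.mem_singleton_self j
      rw [Finset.mem_symmDiff] at hjmem
      rcases hjmem with ⟨hjx, hjy⟩|⟨hjy, hjx⟩
      · have hxy : x = insert j y := by
          apply adj_forced hjy hjx
          rw [symmDiff_comm]; exact hc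
        refine ⟨j, hjx, ?_⟩
        rw [hxy, Finset.erase_insert hjy]
      · have hyx : y = insert j x := adj_forced hjx hjy hc
        rw [hyx, setToNat_insert hjx, hx] at hyk
        exfalso
        have := pow_pos (by norm_num : (0:ℕ) < 2) (j:ℕ)
        omega
    · rintro ⟨i, hi, rfl⟩
      constructor
      · have h1 := setToNat_erase hi
        have h2 := pow_pos (by norm_num : (0:ℕ) < 2) (i:ℕ)
        omega
      · have h1 : symmDiff x (x.erase i) = {i} := by
          ext a
          simp only [Finset.mem_symmDiff, Finset.mem_erase, Finset.mem_singleton]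
          by_cases hai : a = i
          · subst hai; simp [hi]
          · tauto
        rw [h1]; simp
  rw [himg]
  apply Finset.card_image_of_injOn
  intro a ha b hb hab
  simp only at hab
  by_contra hne
  have h1 : a ∈ x.erase b := Finset.mem_erase.2 ⟨hne, ha⟩
  rw [← hab] at h1
  exact Finset.notMem_erase a x h1

lemma eb_iseg {k : ℕ} (hk : k ≤ 2^n) :
    edgesBetween (iseg n k) (iseg n k) = 2 * binF k := by
  induction k with
  | zero => rw [iseg_zero, eb_empty_left]; simp [binF]
  | succ k ih =>
    obtain ⟨x, hx, hins, hnot⟩ := iseg_succ (by omega : k < 2^n)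
    have hd : Disjoint {x} (iseg n k) := by simp [hnot]
    rw [hins, Finset.insert_eq, eb_union_left hd, eb_union_right hd, eb_union_right hd]
    have h1 := eb_point hx
    have h2 : edgesBetween (iseg n k) {x} = x.card := by rw [eb_symm]; exact h1
    have h3 := ih (by omega)
    have h4 : ds k = x.card := card_ds k x hx
    rw [eb_self_singleton, h1, h2, h3, binF_succ]
    omega

lemma iseg_last {m k : ℕ} (hk : k ≤ 2^m) :
    ∀ x ∈ iseg (m+1) k, (⟨m, Nat.lt_succ_self m⟩ : Fin (m+1)) ∉ x := by
  intro x hxI hmem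
  rw [mem_iseg] at hxI
  have h1 : (2:ℕ)^m ≤ setToNat x := by
    have h2 := Finset.single_le_sum (f := fun i : Fin (m+1) => 2^(i:ℕ))
      (fun i _ => Nat.zero_le _) hmem
    exact h2
  omega

lemma barFam_iseg_last {m k : ℕ} (hk : k ≤ 2^m) :
    ∀ y ∈ barFam (iseg (m+1) k), (⟨m, Nat.lt_succ_self m⟩ : Fin (m+1)) ∈ y := by
  intro y hy
  rw [mem_barFam] at hy
  by_contra h
  have h2 : (⟨m, Nat.lt_succ_self m⟩ : Fin (m+1)) ∈ yᶜ := Finset.mem_compl.2 h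
  exact iseg_last hk _ hy h2

lemma eb_iseg_bar {m k : ℕ} (hk : k ≤ 2 ^ m) :
    edgesBetween (iseg (m+1) k) (barFam (iseg (m+1) k)) = k - (2^m - k) := by
  set last : Fin (m+1) := ⟨m, Nat.lt_succ_self m⟩ with hlast
  rw [eb_cross (iseg_last hk) (barFam_iseg_last hk)]
  have hpred : ∀ x ∈ iseg (m+1) k,
      (insert last x ∈ barFam (iseg (m+1) k)) ↔ (2^m - 1 - setToNat x < k) := by
    intro x hxI
    have hlx : last ∉ x := iseg_last hk x hxI
    rw [mem_barFam, mem_iseg]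
    have hcompl : (insert last x)ᶜ = xᶜ.erase last := Finset.compl_insert
    have hlc : last ∈ xᶜ := Finset.mem_compl.2 hlx
    have hv1 := setToNat_erase hlc
    have hv2 := setToNat_compl x
    have hv3 : ((last : Fin (m+1)) : ℕ) = m := rfl
    rw [hcompl]
    rw [hv3] at hv1
    have hp : (2:ℕ)^(m+1) = 2*2^m := by rw [pow_succ]; ring
    omega
  rw [Finset.filter_congr hpred]
  have hcard : ((iseg (m+1) k).filter (fun x => 2^m - 1 - setToNat x < k)).card
      = (Finset.Ico (2^m - k) k).card := by
    apply Finset.card_nbij (fun x => setToNat x)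
    · intro x hx
      simp only [Finset.mem_coe, Finset.mem_filter, mem_iseg] at hx
      simp only [Finset.mem_coe, Finset.mem_Ico]
      omega
    · intro a ha b hb hab
      exact setToNat_inj hab
    · intro v hv
      simp only [Finset.mem_coe, Finset.mem_Ico] at hv
      have hvlt : v < 2^(m+1) := by
        have : (2:ℕ)^m ≤ 2^(m+1) := Nat.pow_le_pow_right (by norm_num) (by omega)
        omega
      obtain ⟨x, hx⟩ := setToNat_surj hvlt
      refine ⟨x, ?_, hx⟩
      simp only [Finset.coe_filter, Set.mem_setOf_eq, mem_iseg]
      omega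
  rw [hcard, Nat.card_Ico]

lemma handshake (A : Finset (Finset (Fin n))) :
    edgesBetween A A + edgeBoundary A = n * A.card := by
  have h1 : edgeBoundary A = edgesBetween A Aᶜ := rfl
  have h2 : A ∪ Aᶜ = (Finset.univ : Finset (Finset (Fin n))) := Finset.union_compl A
  have h3 : Disjoint A Aᶜ := disjoint_compl_right
  have h4 : edgesBetween A Finset.univ = n * A.card := by
    have h5 := eb_powerset (u := (Finset.univ : Finset (Fin n))) (B := A)
      (fun x _ => Finset.subset_univ x)
    rwa [Finset.powerset_univ, Finset.card_univ, Fintype.card_fin] at h5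
  rw [h1, ← h4, ← h2, eb_union_right h3]

lemma edgeBoundary_zero (A : Finset (Finset (Fin 0))) : edgeBoundary A = 0 := by
  unfold edgeBoundary
  convert Finset.card_empty
  rw [Finset.filter_eq_empty_iff]
  rintro ⟨x, y⟩ _
  have hx : x = ∅ := Finset.eq_empty_of_isEmpty x
  have hy : y = ∅ := Finset.eq_empty_of_isEmpty y
  subst hx; subst hy
  simp

end AP

theorem stmt12 (n : ℕ) (A : Finset (Finset (Fin n))) (hA : barFam A = A) :
    edgeBoundary (iseg n (A.card / 2) ∪ barFam (iseg n (A.card / 2))) ≤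
      edgeBoundary A := by
  cases n with
  | zero => rw [AP.edgeBoundary_zero, AP.edgeBoundary_zero]
  | succ m =>
    classical
    have hmemA : ∀ x ∈ A, xᶜ ∈ A := by
      intro x hx
      rw [← hA]
      exact AP.mem_barFam.2 (by rwa [compl_compl])
    set last : Fin (m+1) := ⟨m, Nat.lt_succ_self m⟩ with hlast
    have hsplit := Finset.card_filter_add_card_filter_not (s := A)
      (p := fun x => last ∈ x)
    have hbij : (A.filter (fun x => last ∈ x)).card
        = (A.filter (fun x => ¬ last ∈ x)).card := by
      apply Finset.card_nbij' (fun x => xᶜ) (fun x => xᶜ)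
      · intro x hx
        simp only [Finset.mem_coe, Finset.mem_filter] at hx ⊢
        exact ⟨hmemA x hx.1, by simp [Finset.mem_compl, hx.2]⟩
      · intro x hx
        simp only [Finset.mem_coe, Finset.mem_filter] at hx ⊢
        exact ⟨hmemA x hx.1, Finset.mem_compl.2 hx.2⟩
      · intro x _; simp
      · intro x _; simp
    have hk2 : A.card = 2 * (A.card / 2) := by omega
    set k := A.card / 2 with hkdef
    have hkle : 2 * k ≤ 2 ^ (m+1) := by
      have h1 : A.card ≤ 2 ^ (m+1) := by
        have h2 := Finset.card_le_univ A
        rwa [Fintype.card_finset, Fintype.card_fin] at h2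
      omega
    have hp : (2:ℕ)^(m+1) = 2 * 2^m := by rw [pow_succ]; ring
    have hkm : k ≤ 2 ^ m := by omega
    have hML := AP.ML (Finset.univ : Finset (Fin (m+1))) A (fun x _ => Finset.subset_univ x)
    have hbar : barOn Finset.univ A = A := by
      have h1 : barOn Finset.univ A = barFam A := by
        unfold barOn barFam
        apply Finset.image_congr
        intro x _
        exact (Finset.compl_eq_univ_sdiff x).symm
      rw [h1, hA]
    rw [hbar, Finset.inter_self] at hML
    have hcu : (Finset.univ : Finset (Fin (m+1))).card = m+1 := by simp
    rw [hcu] at hML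
    set I := iseg (m+1) k with hI
    have hIcard : I.card = k := AP.card_iseg (by omega)
    have hdisj : Disjoint I (barFam I) := by
      rw [Finset.disjoint_left]
      intro x hxI hxB
      exact AP.iseg_last hkm x hxI (AP.barFam_iseg_last hkm x hxB)
    have hEcard : (I ∪ barFam I).card = 2 * k := by
      rw [Finset.card_union_of_disjoint hdisj, AP.card_barFam, hIcard]
      ring
    have hebI : edgesBetween I I = 2 * binF k := AP.eb_iseg (by omega)
    have hebB : edgesBetween (barFam I) (barFam I) = 2 * binF k := by
      rw [AP.eb_barFam]; exact hebI
    have hebX : edgesBetween I (barFam I) = k - (2^m - k) := AP.eb_iseg_bar hkm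
    have hebX2 : edgesBetween (barFam I) I = k - (2^m - k) := by
      rw [AP.eb_symm]; exact hebX
    have hebE : edgesBetween (I ∪ barFam I) (I ∪ barFam I)
        = 2*binF k + (k - (2^m - k)) + ((k - (2^m - k)) + 2*binF k) := by
      rw [AP.eb_union_left hdisj, AP.eb_union_right hdisj, AP.eb_union_right hdisj,
        hebI, hebB, hebX, hebX2]
    have hhs1 := AP.handshake A
    have hhs2 := AP.handshake (I ∪ barFam I)
    rw [hEcard] at hhs2
    rw [hk2] at hhs1 hML
    have hb2 := AP.binF_two_mul k
    rw [hb2] at hML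
    generalize hNK : (m+1) * (2*k) = NK at hhs1 hhs2
    omega
end
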